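/- arXiv:1110.0263 — 3 statements merged into one kernel-verified Lean document; each statement's English description precedes it below -/
import Mathlib

section
/- For every n ≥ 1 there is an isomorphism of superalgebras from the super tensor product ℂS_n^- ⊗ Cl_n onto the Hecke–Clifford algebra Hc_n, determined by 1 ⊗ c_i ↦ c_i for 1 ≤ i ≤ n and t_j ⊗ 1 ↦ (1/√(−2))·s_j(c_j − c_{j+1}) for 1 ≤ j ≤ n−1. -/
noncomputable section

/-- Free algebra on generators `t₁,…,t_{n-1}` (the `Sum.inl`s) and `c₁,…,c_n`
(the `Sum.inr`s). -/
abbrev FA (n : ℕ) : Type := FreeAlgebra ℂ (Fin (n-1) ⊕ Fin n)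

def tg (n : ℕ) (i : Fin (n-1)) : FA n := FreeAlgebra.ι ℂ (Sum.inl i)
def cg (n : ℕ) (i : Fin n) : FA n := FreeAlgebra.ι ℂ (Sum.inr i)

/-- The defining relations of the super tensor product `ℂS_n⁻ ⊗ Cl_n`:
the spin symmetric group algebra relations among the odd generators `t_i`, the
Clifford relations among the odd generators `c_i`, and the super-commutation
relations `t_i c_j = - c_j t_i` coming from the sign rule in the super tensor
product of the two superalgebras. -/
inductive SpinTensorRel (n : ℕ) : FA n → FA n → Prop
  | tsq (i : Fin (n-1)) : SpinTensorRel n (tg n i * tg n i) 1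
  | braid (i j : Fin (n-1)) (h : (j : ℕ) = (i : ℕ) + 1) :
      SpinTensorRel n (tg n i * tg n j * tg n i) (tg n j * tg n i * tg n j)
  | tfar (i j : Fin (n-1)) (h : (i : ℕ) + 1 < (j : ℕ)) :
      SpinTensorRel n (tg n i * tg n j) (-(tg n j * tg n i))
  | csq (i : Fin n) : SpinTensorRel n (cg n i * cg n i) 1
  | cskew (i j : Fin n) (h : i ≠ j) :
      SpinTensorRel n (cg n i * cg n j) (-(cg n j * cg n i))
  | mix (i : Fin (n-1)) (j : Fin n) :
      SpinTensorRel n (tg n i * cg n j) (-(cg n j * tg n i))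

/-- The super tensor product `ℂS_n⁻ ⊗ Cl_n`, presented by generators and
relations. -/
abbrev SpinTensor (n : ℕ) : Type := RingQuot (SpinTensorRel n)

def stT (n : ℕ) (i : Fin (n-1)) : SpinTensor n :=
  RingQuot.mkAlgHom ℂ (SpinTensorRel n) (tg n i)
def stC (n : ℕ) (i : Fin n) : SpinTensor n :=
  RingQuot.mkAlgHom ℂ (SpinTensorRel n) (cg n i)

/-- Free algebra on generators `s₁,…,s_{n-1}` (the `Sum.inl`s) and `c₁,…,c_n`
(the `Sum.inr`s). -/
abbrev FB (n : ℕ) : Type := FreeAlgebra ℂ (Fin (n-1) ⊕ Fin n)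

def sg (n : ℕ) (i : Fin (n-1)) : FB n := FreeAlgebra.ι ℂ (Sum.inl i)
def dg (n : ℕ) (i : Fin n) : FB n := FreeAlgebra.ι ℂ (Sum.inr i)

/-- The defining relations of the Hecke-Clifford algebra `Hc_n = Cl_n ⋊ ℂS_n`:
the Coxeter relations among the `s_i`, the Clifford relations among the `c_i`,
and the mixed relations `s_i c_i = c_{i+1} s_i`, `s_i c_{i+1} = c_i s_i`, and
`s_i c_j = c_j s_i` for `j ≠ i, i+1`. -/
inductive HCRel (n : ℕ) : FB n → FB n → Prop
  | ssq (i : Fin (n-1)) : HCRel n (sg n i * sg n i) 1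
  | braid (i j : Fin (n-1)) (h : (j : ℕ) = (i : ℕ) + 1) :
      HCRel n (sg n i * sg n j * sg n i) (sg n j * sg n i * sg n j)
  | sfar (i j : Fin (n-1)) (h : (i : ℕ) + 1 < (j : ℕ)) :
      HCRel n (sg n i * sg n j) (sg n j * sg n i)
  | csq (i : Fin n) : HCRel n (dg n i * dg n i) 1
  | cskew (i j : Fin n) (h : i ≠ j) :
      HCRel n (dg n i * dg n j) (-(dg n j * dg n i))
  | sc1 (i : ℕ) (h : i < n - 1) (h1 : i < n) (h2 : i + 1 < n) :
      HCRel n (sg n ⟨i, h⟩ * dg n ⟨i, h1⟩) (dg n ⟨i+1, h2⟩ * sg n ⟨i, h⟩)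
  | sc2 (i : ℕ) (h : i < n - 1) (h1 : i < n) (h2 : i + 1 < n) :
      HCRel n (sg n ⟨i, h⟩ * dg n ⟨i+1, h2⟩) (dg n ⟨i, h1⟩ * sg n ⟨i, h⟩)
  | sc3 (i : ℕ) (h : i < n - 1) (j : Fin n) (hj1 : (j : ℕ) ≠ i) (hj2 : (j : ℕ) ≠ i + 1) :
      HCRel n (sg n ⟨i, h⟩ * dg n j) (dg n j * sg n ⟨i, h⟩)

/-- The Hecke-Clifford algebra `Hc_n`, presented by generators and relations. -/
abbrev HeckeClifford (n : ℕ) : Type := RingQuot (HCRel n)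

def hcS (n : ℕ) (i : Fin (n-1)) : HeckeClifford n :=
  RingQuot.mkAlgHom ℂ (HCRel n) (sg n i)
def hcC (n : ℕ) (i : Fin n) : HeckeClifford n :=
  RingQuot.mkAlgHom ℂ (HCRel n) (dg n i)

/-- A fixed square root of `-2` in `ℂ`. -/
def sqrtNeg2 : ℂ := Complex.I * (Real.sqrt 2 : ℝ)

/-!
Put `a_j = c_j - c_{j+1}`. From the Clifford relations alone, `a_j² = 2` and
`a_j c_k = -c_{σ k} a_j` for the transposition `σ = (j j+1)`, while in `Hc_n` the `s_j` satisfy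
`s_j c_k = c_{σ k} s_j`. Hence `T_j = (√-2)⁻¹ s_j a_j` anticommutes with every `c_k`, squares to
`1` and satisfies the spin braid relations, so `t_j ↦ T_j`, `c_i ↦ c_i` is a homomorphism
`ℂS_n⁻ ⊗ Cl_n → Hc_n`. Symmetrically `S_j = (√-2 / 2) t_j a_j` conjugates the `c_k` like `s_j`
and satisfies the Coxeter relations, giving a homomorphism back. Since `a_j² = 2`, multiplying
`T_j` or `S_j` on the right by `a_j` recovers `s_j` resp. `t_j`, so the two maps are mutually
inverse. `T_j` is odd (`s_j` even, `a_j` odd), which is why the isomorphism respects parity.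
-/

section RingIdentities

variable {R : Type*} [Ring R]

theorem semiconjBy_neg_iff {a x : R} : SemiconjBy a x (-x) ↔ a * x = -(x * a) := by
  rw [SemiconjBy, neg_mul]

theorem SemiconjBy.neg_symm {a x : R} (h : SemiconjBy a x (-x)) : SemiconjBy x a (-a) := by
  rw [semiconjBy_neg_iff] at h ⊢
  rw [h, neg_neg]

theorem SemiconjBy.neg_right_neg {a x y : R} (h : SemiconjBy a x (-y)) : SemiconjBy a (-x) y := by
  simpa only [neg_neg] using h.neg_right

theorem mul_mul_self_of_semiconjBy_neg {u a : R} (hu : u * u = 1) (h : SemiconjBy u a (-a)) :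
    u * a * (u * a) = -(a * a) :=
  calc u * a * (u * a) = u * a * u * a := by noncomm_ring
    _ = -(a * (u * u) * a) := by rw [h.eq]; noncomm_ring
    _ = -(a * a) := by rw [hu, mul_one]

theorem semiconjBy_mul_mul_neg_of_commute {s₁ s₂ a₁ a₂ : R} (hs : Commute s₁ s₂)
    (h₁ : Commute s₁ a₂) (h₂ : Commute s₂ a₁) (ha : SemiconjBy a₁ a₂ (-a₂)) :
    SemiconjBy (s₁ * a₁) (s₂ * a₂) (-(s₂ * a₂)) := by
  rw [← mul_neg]
  exact SemiconjBy.mul_right (hs.mul_left h₂.symm) (SemiconjBy.mul_left h₁.neg_right ha)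

theorem commute_mul_mul_of_semiconjBy_neg {t₁ t₂ a₁ a₂ : R} (ht : SemiconjBy t₁ t₂ (-t₂))
    (h₁ : SemiconjBy t₁ a₂ (-a₂)) (h₂ : SemiconjBy t₂ a₁ (-a₁)) (ha : SemiconjBy a₁ a₂ (-a₂)) :
    Commute (t₁ * a₁) (t₂ * a₂) :=
  (ht.neg_right_neg.mul_left h₂.neg_symm).mul_right (h₁.neg_right_neg.mul_left ha)

theorem mul_braid_of_semiconjBy {s₁ s₂ a₁ a₂ d : R} (hs : s₁ * s₂ * s₁ = s₂ * s₁ * s₂)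
    (h₁ : SemiconjBy s₂ d a₁) (h₂ : SemiconjBy s₁ d a₂) (h₃ : SemiconjBy s₁ a₂ d)
    (h₄ : SemiconjBy s₂ a₁ d) (ha : a₂ * d * a₁ = a₁ * d * a₂) :
    s₁ * a₁ * (s₂ * a₂) * (s₁ * a₁) = s₂ * a₂ * (s₁ * a₁) * (s₂ * a₂) :=
  calc s₁ * a₁ * (s₂ * a₂) * (s₁ * a₁)
      = s₁ * (a₁ * s₂) * (a₂ * s₁) * a₁ := by noncomm_ring
    _ = s₁ * s₂ * (d * s₁) * (d * a₁) := by rw [← h₁.eq, ← h₂.eq]; noncomm_ring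
    _ = s₁ * s₂ * s₁ * (a₂ * d * a₁) := by rw [← h₃.eq]; noncomm_ring
    _ = s₂ * s₁ * s₂ * (a₁ * d * a₂) := by rw [hs, ha]
    _ = s₂ * s₁ * (d * s₂) * (d * a₂) := by rw [← h₄.eq]; noncomm_ring
    _ = s₂ * (a₂ * s₁) * (a₁ * s₂) * a₂ := by rw [← h₁.eq, ← h₂.eq]; noncomm_ring
    _ = s₂ * a₂ * (s₁ * a₁) * (s₂ * a₂) := by noncomm_ring

theorem mul_mul_mul_eq_neg_of_semiconjBy_neg {t₁ t₂ t₃ a₁ a₂ a₃ : R}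
    (h₁₂ : SemiconjBy t₂ a₁ (-a₁)) (h₁₃ : SemiconjBy t₃ a₁ (-a₁)) (h₂₃ : SemiconjBy t₃ a₂ (-a₂)) :
    t₁ * a₁ * (t₂ * a₂) * (t₃ * a₃) = -(t₁ * t₂ * t₃ * (a₁ * a₂ * a₃)) :=
  calc t₁ * a₁ * (t₂ * a₂) * (t₃ * a₃)
      = t₁ * (a₁ * t₂) * (a₂ * t₃) * a₃ := by noncomm_ring
    _ = t₁ * t₂ * (a₁ * t₃) * (a₂ * a₃) := by
        rw [h₁₂.neg_symm.eq, h₂₃.neg_symm.eq]; noncomm_ring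
    _ = -(t₁ * t₂ * t₃ * (a₁ * a₂ * a₃)) := by rw [h₁₃.neg_symm.eq]; noncomm_ring

theorem mul_braid_of_mul_self_eq_two {a b : R} (ha : a * a = 2) (hb : b * b = 2)
    (hab : a * b + b * a = -2) : a * b * a = b * a * b :=
  calc a * b * a = (a * b + b * a) * a - b * (a * a) := by noncomm_ring
    _ = (a * b + b * a) * b - a * (b * b) := by rw [hab, ha, hb]; noncomm_ring
    _ = b * a * b := by noncomm_ring

theorem mul_add_mul_eq_of_mul_self_eq_two {a b : R} (ha : a * a = 2) (hb : b * b = 2) :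
    b * (a + b) * a = a * (a + b) * b :=
  calc b * (a + b) * a = b * (a * a) + b * b * a := by noncomm_ring
    _ = a * a * b + a * (b * b) := by rw [ha, hb]; noncomm_ring
    _ = a * (a + b) * b := by noncomm_ring

end RingIdentities

section Scalars

variable {K A : Type*} [CommRing K] [Ring A] [Algebra K A]

theorem smul_mul_smul_self_eq_one {r : K} (hr : r * r * -2 = 1) {x : A} (hx : x * x = -2) :
    r • x * r • x = 1 := by
  rw [smul_mul_smul_comm, hx, Algebra.smul_def, ← map_ofNat (algebraMap K A) 2, ← map_neg,
    ← map_mul, hr, map_one]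

theorem smul_smul_mul_mul_self {r r' : K} (hr : r * r' * 2 = 1) {u a : A} (ha : a * a = 2) :
    r • (r' • (u * a) * a) = u := by
  rw [smul_mul_assoc, mul_assoc, ha, mul_two, ← two_smul K u, smul_smul, smul_smul, hr, one_smul]

theorem smul_braid {r : K} {x y : A} (h : x * y * x = y * x * y) :
    r • x * r • y * r • x = r • y * r • x * r • y := by
  rw [smul_mul_smul_comm, smul_mul_smul_comm, h, smul_mul_smul_comm, smul_mul_smul_comm]

theorem SemiconjBy.smul_smul_neg {r : K} {x y : A} (h : SemiconjBy x y (-y)) :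
    SemiconjBy (r • x) (r • y) (-(r • y)) := by
  simpa only [smul_neg] using (h.smul_right r).smul_left r

end Scalars

section Clifford

variable {ι A : Type*} [Ring A]

structure IsCliffordFamily (c : ι → A) : Prop where
  mul_self : ∀ i, c i * c i = 1
  semiconjBy : ∀ {i j}, i ≠ j → SemiconjBy (c i) (c j) (-c j)

namespace IsCliffordFamily

variable {c : ι → A} {i j k l : ι}

theorem sub_mul_self (hc : IsCliffordFamily c) (hij : i ≠ j) : (c i - c j) * (c i - c j) = 2 := by
  rw [sub_mul, mul_sub, mul_sub, hc.mul_self, hc.mul_self, (hc.semiconjBy hij).eq]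
  noncomm_ring
  norm_num

theorem semiconjBy_sub_of_ne (hc : IsCliffordFamily c) (hki : k ≠ i) (hkj : k ≠ j) :
    SemiconjBy (c i - c j) (c k) (-c k) :=
  (hc.semiconjBy hki.symm).sub_left (hc.semiconjBy hkj.symm)

theorem semiconjBy_sub [DecidableEq ι] (hc : IsCliffordFamily c) (hij : i ≠ j) (k : ι) :
    SemiconjBy (c i - c j) (c k) (-c (Equiv.swap i j k)) := by
  rcases eq_or_ne k i with rfl | hki
  · rw [Equiv.swap_apply_left, SemiconjBy, sub_mul, mul_sub, neg_mul, neg_mul, hc.mul_self,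
      hc.mul_self]
    noncomm_ring
  rcases eq_or_ne k j with rfl | hkj
  · rw [Equiv.swap_apply_right, SemiconjBy, sub_mul, mul_sub, neg_mul, neg_mul, hc.mul_self,
      hc.mul_self, (hc.semiconjBy hij).eq]
    noncomm_ring
  rw [Equiv.swap_apply_of_ne_of_ne hki hkj]
  exact hc.semiconjBy_sub_of_ne hki hkj

theorem semiconjBy_sub_sub (hc : IsCliffordFamily c) (hki : k ≠ i) (hkj : k ≠ j) (hli : l ≠ i)
    (hlj : l ≠ j) : SemiconjBy (c i - c j) (c k - c l) (-(c k - c l)) := by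
  simpa only [neg_sub_neg, neg_sub] using
    (hc.semiconjBy_sub_of_ne hki hkj).sub_right (hc.semiconjBy_sub_of_ne hli hlj)

theorem sub_braid (hc : IsCliffordFamily c) (hij : i ≠ j) (hjk : j ≠ k) (hik : i ≠ k) :
    (c i - c j) * (c j - c k) * (c i - c j) = (c j - c k) * (c i - c j) * (c j - c k) := by
  refine mul_braid_of_mul_self_eq_two (hc.sub_mul_self hij) (hc.sub_mul_self hjk) ?_
  rw [sub_mul, mul_sub, mul_sub, sub_mul, mul_sub, mul_sub, hc.mul_self, (hc.semiconjBy hij).eq,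
    (hc.semiconjBy hik).eq, (hc.semiconjBy hjk).eq]
  noncomm_ring
  norm_num

theorem mul_braid_of_semiconjBy_swap [DecidableEq ι] (hc : IsCliffordFamily c) {p q r : ι}
    (hpq : p ≠ q) (hqr : q ≠ r) (hpr : p ≠ r) {s₁ s₂ : A} (hs : s₁ * s₂ * s₁ = s₂ * s₁ * s₂)
    (h₁ : ∀ k, SemiconjBy s₁ (c k) (c (Equiv.swap p q k)))
    (h₂ : ∀ k, SemiconjBy s₂ (c k) (c (Equiv.swap q r k))) :
    s₁ * (c p - c q) * (s₂ * (c q - c r)) * (s₁ * (c p - c q)) =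
      s₂ * (c q - c r) * (s₁ * (c p - c q)) * (s₂ * (c q - c r)) := by
  have hrp : Equiv.swap p q r = r := Equiv.swap_apply_of_ne_of_ne hpr.symm hqr.symm
  have hpr' : Equiv.swap q r p = p := Equiv.swap_apply_of_ne_of_ne hpq hpr
  refine mul_braid_of_semiconjBy (d := c p - c r) hs ?_ ?_ ?_ ?_ ?_
  · simpa only [hpr', Equiv.swap_apply_right] using (h₂ p).sub_right (h₂ r)
  · simpa only [hrp, Equiv.swap_apply_left] using (h₁ p).sub_right (h₁ r)
  · simpa only [hrp, Equiv.swap_apply_right] using (h₁ q).sub_right (h₁ r)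
  · simpa only [hpr', Equiv.swap_apply_left] using (h₂ p).sub_right (h₂ q)
  · rw [← sub_add_sub_cancel (c p) (c q) (c r)]
    exact mul_add_mul_eq_of_mul_self_eq_two (hc.sub_mul_self hpq) (hc.sub_mul_self hqr)

end IsCliffordFamily

end Clifford

section Adjacent

variable {n : ℕ}

def adjLow (j : Fin (n - 1)) : Fin n := ⟨j, by omega⟩

def adjHigh (j : Fin (n - 1)) : Fin n := ⟨j + 1, by omega⟩

def adjSwap (j : Fin (n - 1)) : Equiv.Perm (Fin n) := Equiv.swap (adjLow j) (adjHigh j)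

@[simp] theorem val_adjLow (j : Fin (n - 1)) : (adjLow j : ℕ) = j := rfl

@[simp] theorem val_adjHigh (j : Fin (n - 1)) : (adjHigh j : ℕ) = j + 1 := rfl

theorem adjLow_ne_adjHigh (j : Fin (n - 1)) : adjLow j ≠ adjHigh j :=
  Fin.ne_of_val_ne (by simp)

@[simp] theorem adjSwap_adjLow (j : Fin (n - 1)) : adjSwap j (adjLow j) = adjHigh j :=
  Equiv.swap_apply_left _ _

@[simp] theorem adjSwap_adjHigh (j : Fin (n - 1)) : adjSwap j (adjHigh j) = adjLow j :=
  Equiv.swap_apply_right _ _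

theorem adjSwap_apply_of_val_ne {j : Fin (n - 1)} {k : Fin n} (hk : (k : ℕ) ≠ j)
    (hk' : (k : ℕ) ≠ j + 1) : adjSwap j k = k :=
  Equiv.swap_apply_of_ne_of_ne (Fin.ne_of_val_ne hk) (Fin.ne_of_val_ne hk')

variable {A : Type*} [Ring A]

def adjRoot (c : Fin n → A) (j : Fin (n - 1)) : A := c (adjLow j) - c (adjHigh j)

theorem map_adjRoot {B F : Type*} [Ring B] [FunLike F A B] [AddMonoidHomClass F A B] (f : F)
    (c : Fin n → A) (j : Fin (n - 1)) : f (adjRoot c j) = adjRoot (fun i => f (c i)) j :=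
  map_sub f _ _

theorem adjRoot_neg (c : Fin n → A) (j : Fin (n - 1)) :
    adjRoot (fun i => -c i) j = -adjRoot c j :=
  (neg_sub_neg _ _).trans (neg_sub _ _).symm

namespace IsCliffordFamily

variable {c : Fin n → A}

theorem adjRoot_mul_self (hc : IsCliffordFamily c) (j : Fin (n - 1)) :
    adjRoot c j * adjRoot c j = 2 :=
  hc.sub_mul_self (adjLow_ne_adjHigh j)

theorem adjRoot_semiconjBy (hc : IsCliffordFamily c) (j : Fin (n - 1)) (k : Fin n) :
    SemiconjBy (adjRoot c j) (c k) (-c (adjSwap j k)) :=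
  hc.semiconjBy_sub (adjLow_ne_adjHigh j) k

theorem adjRoot_semiconjBy_adjRoot (hc : IsCliffordFamily c) {i j : Fin (n - 1)}
    (h : (i : ℕ) + 1 < j) : SemiconjBy (adjRoot c i) (adjRoot c j) (-adjRoot c j) :=
  hc.semiconjBy_sub_sub (Fin.ne_of_val_ne (by simp; omega)) (Fin.ne_of_val_ne (by simp; omega))
    (Fin.ne_of_val_ne (by simp; omega)) (Fin.ne_of_val_ne (by simp; omega))

theorem adjRoot_braid (hc : IsCliffordFamily c) {i j : Fin (n - 1)} (h : (j : ℕ) = i + 1) :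
    adjRoot c i * adjRoot c j * adjRoot c i = adjRoot c j * adjRoot c i * adjRoot c j := by
  have hq : adjLow j = adjHigh i := Fin.ext (by simp [h])
  rw [adjRoot, adjRoot, hq]
  exact hc.sub_braid (adjLow_ne_adjHigh i) (by simpa [hq] using adjLow_ne_adjHigh j)
    (Fin.ne_of_val_ne (by simp; omega))

end IsCliffordFamily

end Adjacent

section Relations

variable {n : ℕ}

theorem hcS_mul_self (i : Fin (n - 1)) : hcS n i * hcS n i = 1 := by
  simpa only [map_mul, map_one, hcS] using RingQuot.mkAlgHom_rel ℂ (HCRel.ssq i)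

theorem hcS_braid {i j : Fin (n - 1)} (h : (j : ℕ) = i + 1) :
    hcS n i * hcS n j * hcS n i = hcS n j * hcS n i * hcS n j := by
  simpa only [map_mul, hcS] using RingQuot.mkAlgHom_rel ℂ (HCRel.braid i j h)

theorem hcS_commute {i j : Fin (n - 1)} (h : (i : ℕ) + 1 < j) : Commute (hcS n i) (hcS n j) := by
  simpa only [Commute, SemiconjBy, map_mul, hcS] using RingQuot.mkAlgHom_rel ℂ (HCRel.sfar i j h)

theorem isCliffordFamily_hcC : IsCliffordFamily (hcC n) where
  mul_self i := by simpa only [map_mul, map_one, hcC] using RingQuot.mkAlgHom_rel ℂ (HCRel.csq i)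
  semiconjBy {i j} h := semiconjBy_neg_iff.mpr <| by
    simpa only [map_mul, map_neg, hcC] using RingQuot.mkAlgHom_rel ℂ (HCRel.cskew i j h)

theorem hcS_semiconjBy_hcC (j : Fin (n - 1)) (k : Fin n) :
    SemiconjBy (hcS n j) (hcC n k) (hcC n (adjSwap j k)) := by
  obtain ⟨j, hj⟩ := j
  rcases eq_or_ne k (adjLow ⟨j, hj⟩) with rfl | hkl
  · rw [adjSwap_adjLow]
    simpa only [SemiconjBy, map_mul, hcS, hcC, adjLow, adjHigh] using
      RingQuot.mkAlgHom_rel ℂ (HCRel.sc1 j hj _ _)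
  rcases eq_or_ne k (adjHigh ⟨j, hj⟩) with rfl | hkh
  · rw [adjSwap_adjHigh]
    simpa only [SemiconjBy, map_mul, hcS, hcC, adjLow, adjHigh] using
      RingQuot.mkAlgHom_rel ℂ (HCRel.sc2 j hj _ _)
  rw [adjSwap, Equiv.swap_apply_of_ne_of_ne hkl hkh]
  simpa only [SemiconjBy, map_mul, hcS, hcC] using RingQuot.mkAlgHom_rel ℂ
    (HCRel.sc3 j hj k (fun h => hkl (Fin.ext h)) (fun h => hkh (Fin.ext h)))

theorem hcS_semiconjBy_adjRoot (j : Fin (n - 1)) :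
    SemiconjBy (hcS n j) (adjRoot (hcC n) j) (-adjRoot (hcC n) j) := by
  have h := (hcS_semiconjBy_hcC j (adjLow j)).sub_right (hcS_semiconjBy_hcC j (adjHigh j))
  rwa [adjSwap_adjLow, adjSwap_adjHigh, ← neg_sub (hcC n (adjLow j))] at h

theorem hcS_commute_adjRoot {i j : Fin (n - 1)} (h : (i : ℕ) + 1 < j ∨ (j : ℕ) + 1 < i) :
    Commute (hcS n i) (adjRoot (hcC n) j) := by
  have hl : adjSwap i (adjLow j) = adjLow j :=
    adjSwap_apply_of_val_ne (by simp; omega) (by simp; omega)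
  have hh : adjSwap i (adjHigh j) = adjHigh j :=
    adjSwap_apply_of_val_ne (by simp; omega) (by simp; omega)
  have h := (hcS_semiconjBy_hcC i (adjLow j)).sub_right (hcS_semiconjBy_hcC i (adjHigh j))
  rwa [hl, hh] at h

theorem stT_mul_self (i : Fin (n - 1)) : stT n i * stT n i = 1 := by
  simpa only [map_mul, map_one, stT] using RingQuot.mkAlgHom_rel ℂ (SpinTensorRel.tsq i)

theorem stT_braid {i j : Fin (n - 1)} (h : (j : ℕ) = i + 1) :
    stT n i * stT n j * stT n i = stT n j * stT n i * stT n j := by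
  simpa only [map_mul, stT] using RingQuot.mkAlgHom_rel ℂ (SpinTensorRel.braid i j h)

theorem stT_semiconjBy_stT {i j : Fin (n - 1)} (h : (i : ℕ) + 1 < j) :
    SemiconjBy (stT n i) (stT n j) (-stT n j) := semiconjBy_neg_iff.mpr <| by
  simpa only [map_mul, map_neg, stT] using RingQuot.mkAlgHom_rel ℂ (SpinTensorRel.tfar i j h)

theorem isCliffordFamily_stC : IsCliffordFamily (stC n) where
  mul_self i := by
    simpa only [map_mul, map_one, stC] using RingQuot.mkAlgHom_rel ℂ (SpinTensorRel.csq i)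
  semiconjBy {i j} h := semiconjBy_neg_iff.mpr <| by
    simpa only [map_mul, map_neg, stC] using RingQuot.mkAlgHom_rel ℂ (SpinTensorRel.cskew i j h)

theorem stT_semiconjBy_stC (i : Fin (n - 1)) (k : Fin n) :
    SemiconjBy (stT n i) (stC n k) (-stC n k) := semiconjBy_neg_iff.mpr <| by
  simpa only [map_mul, map_neg, stT, stC] using RingQuot.mkAlgHom_rel ℂ (SpinTensorRel.mix i k)

theorem stT_semiconjBy_adjRoot (i j : Fin (n - 1)) :
    SemiconjBy (stT n i) (adjRoot (stC n) j) (-adjRoot (stC n) j) := by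
  simpa only [adjRoot, neg_sub_neg, neg_sub] using
    (stT_semiconjBy_stC i (adjLow j)).sub_right (stT_semiconjBy_stC i (adjHigh j))

end Relations

theorem sqrtNeg2_mul_self : sqrtNeg2 * sqrtNeg2 = -2 := by
  have h : ((Real.sqrt 2 : ℝ) : ℂ) * (Real.sqrt 2 : ℝ) = 2 := by
    rw [← Complex.ofReal_mul, Real.mul_self_sqrt zero_le_two, Complex.ofReal_ofNat]
  calc sqrtNeg2 * sqrtNeg2 = Complex.I * Complex.I * ((Real.sqrt 2 : ℝ) * (Real.sqrt 2 : ℝ)) := by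
        rw [sqrtNeg2]; ring
    _ = -2 := by rw [Complex.I_mul_I, h]; ring

theorem sqrtNeg2_ne_zero : sqrtNeg2 ≠ 0 := fun h => by
  simpa [h] using sqrtNeg2_mul_self

theorem inv_sqrtNeg2_mul_self : sqrtNeg2⁻¹ * sqrtNeg2⁻¹ * -2 = 1 := by
  rw [← mul_inv, sqrtNeg2_mul_self]
  norm_num

theorem half_sqrtNeg2_mul_self : sqrtNeg2 / 2 * (sqrtNeg2 / 2) * -2 = 1 := by
  linear_combination (-1 / 2 : ℂ) * sqrtNeg2_mul_self

section Twisted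

variable {n : ℕ}

def hcT (j : Fin (n - 1)) : HeckeClifford n := sqrtNeg2⁻¹ • (hcS n j * adjRoot (hcC n) j)

-- `hcT j * adjRoot (hcC n) j = (2 / sqrtNeg2) • hcS n j`, so this is the preimage of `hcS n j`.
def stS (j : Fin (n - 1)) : SpinTensor n := (sqrtNeg2 / 2) • (stT n j * adjRoot (stC n) j)

theorem hcT_mul_self (j : Fin (n - 1)) : hcT j * hcT j = 1 := by
  have h : hcS n j * adjRoot (hcC n) j * (hcS n j * adjRoot (hcC n) j) = -2 := by
    rw [mul_mul_self_of_semiconjBy_neg (hcS_mul_self j) (hcS_semiconjBy_adjRoot j),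
      isCliffordFamily_hcC.adjRoot_mul_self]
  exact smul_mul_smul_self_eq_one inv_sqrtNeg2_mul_self h

theorem hcT_braid {i j : Fin (n - 1)} (h : (j : ℕ) = i + 1) :
    hcT i * hcT j * hcT i = hcT j * hcT i * hcT j := by
  have hq : adjLow j = adjHigh i := Fin.ext (by simp [h])
  have hs₂ := hcS_semiconjBy_hcC j
  simp only [adjSwap, hq] at hs₂
  have hbraid : hcS n i * adjRoot (hcC n) i * (hcS n j * adjRoot (hcC n) j) *
      (hcS n i * adjRoot (hcC n) i) =
      hcS n j * adjRoot (hcC n) j * (hcS n i * adjRoot (hcC n) i) *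
        (hcS n j * adjRoot (hcC n) j) := by
    rw [adjRoot, adjRoot, hq]
    exact isCliffordFamily_hcC.mul_braid_of_semiconjBy_swap (adjLow_ne_adjHigh i)
      (by simpa [hq] using adjLow_ne_adjHigh j) (Fin.ne_of_val_ne (by simp; omega))
      (hcS_braid h) (hcS_semiconjBy_hcC i) hs₂
  exact smul_braid hbraid

theorem hcT_semiconjBy_hcT {i j : Fin (n - 1)} (h : (i : ℕ) + 1 < j) :
    SemiconjBy (hcT i) (hcT j) (-hcT j) :=
  (semiconjBy_mul_mul_neg_of_commute (hcS_commute h) (hcS_commute_adjRoot (.inl h))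
    (hcS_commute_adjRoot (.inr h))
    (isCliffordFamily_hcC.adjRoot_semiconjBy_adjRoot h)).smul_smul_neg

theorem hcT_semiconjBy_hcC (j : Fin (n - 1)) (k : Fin n) :
    SemiconjBy (hcT j) (hcC n k) (-hcC n k) := by
  have hs := (hcS_semiconjBy_hcC j (adjSwap j k)).neg_right
  rw [adjSwap, Equiv.swap_apply_self] at hs
  exact (hs.mul_left (isCliffordFamily_hcC.adjRoot_semiconjBy j k)).smul_left _

theorem stS_mul_self (j : Fin (n - 1)) : stS j * stS j = 1 := by
  have h : stT n j * adjRoot (stC n) j * (stT n j * adjRoot (stC n) j) = -2 := by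
    rw [mul_mul_self_of_semiconjBy_neg (stT_mul_self j) (stT_semiconjBy_adjRoot j j),
      isCliffordFamily_stC.adjRoot_mul_self]
  exact smul_mul_smul_self_eq_one half_sqrtNeg2_mul_self h

theorem stS_braid {i j : Fin (n - 1)} (h : (j : ℕ) = i + 1) :
    stS i * stS j * stS i = stS j * stS i * stS j := by
  have hbraid : stT n i * adjRoot (stC n) i * (stT n j * adjRoot (stC n) j) *
      (stT n i * adjRoot (stC n) i) =
      stT n j * adjRoot (stC n) j * (stT n i * adjRoot (stC n) i) *
        (stT n j * adjRoot (stC n) j) := by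
    rw [mul_mul_mul_eq_neg_of_semiconjBy_neg (stT_semiconjBy_adjRoot _ _)
        (stT_semiconjBy_adjRoot _ _) (stT_semiconjBy_adjRoot _ _),
      mul_mul_mul_eq_neg_of_semiconjBy_neg (stT_semiconjBy_adjRoot _ _)
        (stT_semiconjBy_adjRoot _ _) (stT_semiconjBy_adjRoot _ _),
      stT_braid h, isCliffordFamily_stC.adjRoot_braid h]
  exact smul_braid hbraid

theorem stS_commute {i j : Fin (n - 1)} (h : (i : ℕ) + 1 < j) : Commute (stS i) (stS j) :=
  ((commute_mul_mul_of_semiconjBy_neg (stT_semiconjBy_stT h) (stT_semiconjBy_adjRoot i j)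
    (stT_semiconjBy_adjRoot j i) (isCliffordFamily_stC.adjRoot_semiconjBy_adjRoot h)).smul_right
      _).smul_left _

theorem stS_semiconjBy_stC (j : Fin (n - 1)) (k : Fin n) :
    SemiconjBy (stS j) (stC n k) (stC n (adjSwap j k)) :=
  ((stT_semiconjBy_stC j (adjSwap j k)).neg_right_neg.mul_left
    (isCliffordFamily_stC.adjRoot_semiconjBy j k)).smul_left _

end Twisted

section Isomorphism

variable {n : ℕ}

theorem SpinTensor.algHom_ext {B : Type*} [Semiring B] [Algebra ℂ B]
    {f g : SpinTensor n →ₐ[ℂ] B} (ht : ∀ i, f (stT n i) = g (stT n i))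
    (hc : ∀ i, f (stC n i) = g (stC n i)) : f = g :=
  RingQuot.ringQuot_ext' _ _ _ <| FreeAlgebra.hom_ext <| funext <| Sum.rec ht hc

theorem HeckeClifford.algHom_ext {B : Type*} [Semiring B] [Algebra ℂ B]
    {f g : HeckeClifford n →ₐ[ℂ] B} (hs : ∀ i, f (hcS n i) = g (hcS n i))
    (hc : ∀ i, f (hcC n i) = g (hcC n i)) : f = g :=
  RingQuot.ringQuot_ext' _ _ _ <| FreeAlgebra.hom_ext <| funext <| Sum.rec hs hc

theorem lift_eq_of_spinTensorRel {x y : FA n} (r : SpinTensorRel n x y) :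
    FreeAlgebra.lift ℂ (Sum.elim hcT (hcC n)) x = FreeAlgebra.lift ℂ (Sum.elim hcT (hcC n)) y := by
  cases r <;> simp only [tg, cg, map_mul, map_one, map_neg, FreeAlgebra.lift_ι_apply, Sum.elim_inl,
    Sum.elim_inr]
  case tsq i => exact hcT_mul_self i
  case braid h => exact hcT_braid h
  case tfar h => exact semiconjBy_neg_iff.mp (hcT_semiconjBy_hcT h)
  case csq i => exact isCliffordFamily_hcC.mul_self i
  case cskew h => exact semiconjBy_neg_iff.mp (isCliffordFamily_hcC.semiconjBy h)
  case mix i k => exact semiconjBy_neg_iff.mp (hcT_semiconjBy_hcC i k)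

theorem lift_eq_of_hcRel {x y : FB n} (r : HCRel n x y) :
    FreeAlgebra.lift ℂ (Sum.elim stS (stC n)) x = FreeAlgebra.lift ℂ (Sum.elim stS (stC n)) y := by
  cases r <;> simp only [sg, dg, map_mul, map_one, map_neg, FreeAlgebra.lift_ι_apply, Sum.elim_inl,
    Sum.elim_inr]
  case ssq i => exact stS_mul_self i
  case braid h => exact stS_braid h
  case sfar h => exact stS_commute h
  case csq i => exact isCliffordFamily_stC.mul_self i
  case cskew h => exact semiconjBy_neg_iff.mp (isCliffordFamily_stC.semiconjBy h)
  case sc1 i h _ _ =>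
    have hs := stS_semiconjBy_stC ⟨i, h⟩ (adjLow ⟨i, h⟩)
    rwa [adjSwap_adjLow] at hs
  case sc2 i h _ _ =>
    have hs := stS_semiconjBy_stC ⟨i, h⟩ (adjHigh ⟨i, h⟩)
    rwa [adjSwap_adjHigh] at hs
  case sc3 i h k hk hk' =>
    have hs := stS_semiconjBy_stC ⟨i, h⟩ k
    rwa [adjSwap_apply_of_val_ne hk hk'] at hs

def SpinTensor.toHeckeClifford : SpinTensor n →ₐ[ℂ] HeckeClifford n :=
  RingQuot.liftAlgHom ℂ
    ⟨FreeAlgebra.lift ℂ (Sum.elim hcT (hcC n)), fun _ _ => lift_eq_of_spinTensorRel⟩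

def HeckeClifford.toSpinTensor : HeckeClifford n →ₐ[ℂ] SpinTensor n :=
  RingQuot.liftAlgHom ℂ ⟨FreeAlgebra.lift ℂ (Sum.elim stS (stC n)), fun _ _ => lift_eq_of_hcRel⟩

@[simp] theorem SpinTensor.toHeckeClifford_stT (j : Fin (n - 1)) :
    SpinTensor.toHeckeClifford (stT n j) = hcT j := by
  simp [SpinTensor.toHeckeClifford, stT, tg]

@[simp] theorem SpinTensor.toHeckeClifford_stC (i : Fin n) :
    SpinTensor.toHeckeClifford (stC n i) = hcC n i := by
  simp [SpinTensor.toHeckeClifford, stC, cg]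

@[simp] theorem HeckeClifford.toSpinTensor_hcS (j : Fin (n - 1)) :
    HeckeClifford.toSpinTensor (hcS n j) = stS j := by
  simp [HeckeClifford.toSpinTensor, hcS, sg]

@[simp] theorem HeckeClifford.toSpinTensor_hcC (i : Fin n) :
    HeckeClifford.toSpinTensor (hcC n i) = stC n i := by
  simp [HeckeClifford.toSpinTensor, hcC, dg]

theorem toHeckeClifford_comp_toSpinTensor :
    SpinTensor.toHeckeClifford.comp HeckeClifford.toSpinTensor = AlgHom.id ℂ (HeckeClifford n) := by
  refine HeckeClifford.algHom_ext (fun j => ?_) (fun i => by simp)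
  rw [AlgHom.comp_apply, HeckeClifford.toSpinTensor_hcS, stS, map_smul, map_mul, map_adjRoot,
    SpinTensor.toHeckeClifford_stT, hcT]
  simp only [SpinTensor.toHeckeClifford_stC]
  exact smul_smul_mul_mul_self (by field_simp [sqrtNeg2_ne_zero])
    (isCliffordFamily_hcC.adjRoot_mul_self j)

theorem toSpinTensor_comp_toHeckeClifford :
    HeckeClifford.toSpinTensor.comp SpinTensor.toHeckeClifford = AlgHom.id ℂ (SpinTensor n) := by
  refine SpinTensor.algHom_ext (fun j => ?_) (fun i => by simp)
  rw [AlgHom.comp_apply, SpinTensor.toHeckeClifford_stT, hcT, map_smul, map_mul, map_adjRoot,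
    HeckeClifford.toSpinTensor_hcS, stS]
  simp only [HeckeClifford.toSpinTensor_hcC]
  exact smul_smul_mul_mul_self (by field_simp [sqrtNeg2_ne_zero])
    (isCliffordFamily_stC.adjRoot_mul_self j)

theorem toHeckeClifford_comp_parity (PA : SpinTensor n →ₐ[ℂ] SpinTensor n)
    (PH : HeckeClifford n →ₐ[ℂ] HeckeClifford n) (hAt : ∀ i, PA (stT n i) = -stT n i)
    (hAc : ∀ i, PA (stC n i) = -stC n i) (hHs : ∀ i, PH (hcS n i) = hcS n i)
    (hHc : ∀ i, PH (hcC n i) = -hcC n i) :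
    SpinTensor.toHeckeClifford.comp PA = PH.comp SpinTensor.toHeckeClifford :=
  SpinTensor.algHom_ext (fun j => by
      simp only [AlgHom.comp_apply, hAt, map_neg, SpinTensor.toHeckeClifford_stT, hcT, map_smul,
        map_mul, hHs, map_adjRoot, hHc, adjRoot_neg]
      exact ((congrArg (sqrtNeg2⁻¹ • ·) (mul_neg (hcS n j) (adjRoot (hcC n) j))).trans
        (smul_neg _ _)).symm)
    (fun i => by simp [hAc, hHc])

end Isomorphism

/-- Being a superalgebra isomorphism is expressed by saying that the algebra isomorphism
intertwines the parity involutions of the two superalgebras (the unique algebra automorphisms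
negating all the odd generators `t_i, c_i`, resp. negating the `c_i` and fixing the even
generators `s_i`). -/
theorem spin_tensor_clifford_iso_heckeClifford_general (n : ℕ) :
    ∃ Φ : SpinTensor n ≃ₐ[ℂ] HeckeClifford n,
      (∀ i : Fin n, Φ (stC n i) = hcC n i) ∧
      (∀ (j : ℕ) (h : j < n - 1) (h1 : j < n) (h2 : j + 1 < n),
        Φ (stT n ⟨j, h⟩) =
          (sqrtNeg2)⁻¹ • (hcS n ⟨j, h⟩ * (hcC n ⟨j, h1⟩ - hcC n ⟨j+1, h2⟩))) ∧
      (∀ (PA : SpinTensor n ≃ₐ[ℂ] SpinTensor n) (PH : HeckeClifford n ≃ₐ[ℂ] HeckeClifford n),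
        (∀ i, PA (stT n i) = - stT n i) → (∀ i, PA (stC n i) = - stC n i) →
        (∀ i, PH (hcS n i) = hcS n i) → (∀ i, PH (hcC n i) = - hcC n i) →
        ∀ a : SpinTensor n, Φ (PA a) = PH (Φ a)) :=
  ⟨AlgEquiv.ofAlgHom SpinTensor.toHeckeClifford HeckeClifford.toSpinTensor
      toHeckeClifford_comp_toSpinTensor toSpinTensor_comp_toHeckeClifford,
    SpinTensor.toHeckeClifford_stC, fun j h _ _ => SpinTensor.toHeckeClifford_stT ⟨j, h⟩,
    fun PA PH hAt hAc hHs hHc =>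
      AlgHom.congr_fun (toHeckeClifford_comp_parity PA.toAlgHom PH.toAlgHom hAt hAc hHs hHc)⟩

/-- for `n ≥ 1` there is an isomorphism of superalgebras
`ℂS_n⁻ ⊗ Cl_n ≅ Hc_n` determined by `1 ⊗ c_i ↦ c_i` and
`t_j ⊗ 1 ↦ (1/√(-2)) s_j (c_j - c_{j+1})`.  Being a superalgebra isomorphism is
expressed by saying that the algebra isomorphism intertwines the parity
involutions of the two superalgebras (the unique algebra automorphisms negating
all the odd generators `t_i, c_i`, resp. negating the `c_i` and fixing the even
generators `s_i`). -/
theorem spin_tensor_clifford_iso_heckeClifford (n : ℕ) (hn : 1 ≤ n) :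
    ∃ Φ : SpinTensor n ≃ₐ[ℂ] HeckeClifford n,
      (∀ i : Fin n, Φ (stC n i) = hcC n i) ∧
      (∀ (j : ℕ) (h : j < n - 1) (h1 : j < n) (h2 : j + 1 < n),
        Φ (stT n ⟨j, h⟩) =
          (sqrtNeg2)⁻¹ • (hcS n ⟨j, h⟩ * (hcC n ⟨j, h1⟩ - hcC n ⟨j+1, h2⟩))) ∧
      (∀ (PA : SpinTensor n ≃ₐ[ℂ] SpinTensor n) (PH : HeckeClifford n ≃ₐ[ℂ] HeckeClifford n),
        (∀ i, PA (stT n i) = - stT n i) → (∀ i, PA (stC n i) = - stC n i) →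
        (∀ i, PH (hcS n i) = hcS n i) → (∀ i, PH (hcC n i) = - hcC n i) →
        ∀ a : SpinTensor n, Φ (PA a) = PH (Φ a)) :=
  spin_tensor_clifford_iso_heckeClifford_general n

end
end

section
/- Let σ ∈ S_n have cycle type α, where α is a partition of n all of whose parts are odd. Then the trace of the ℂ-linear algebra automorphism of the 2ⁿ-dimensional Clifford algebra Cl_n induced by c_i ↦ c_{σ(i)} equals 2^{ℓ(α)}, where ℓ(α) is the number of parts of α. (Equivalently, the character of the basic spin Hc_n-module Cl_n at the split conjugacy class C_α⁺ is 2^{ℓ(α)}.) -/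
/-
The ordered monomials `c_S` (`S ⊆ {1,…,n}`) span `Cl_n`, and there are `2ⁿ` of them, which is
the dimension of `Cl_n` (as a vector space it is the exterior algebra of `ℂⁿ`), so they form a
basis. The automorphism sends `c_S` to `±c_{σ(S)}`, so only σ-stable sets
`S` contribute to the trace. For such `S` the sign `ε` satisfies `ε ^ orderOf σ = 1`, because
`g ^ orderOf σ` fixes every generator; the order of σ is the lcm of the odd cycle lengths, hence
odd, so `ε = 1`. The trace therefore counts the σ-stable subsets, i.e. the unions of cycles
(fixed points included), and there are `2^{ℓ(α)}` of those.
-/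

noncomputable section

def sumSq (n : ℕ) : QuadraticForm ℂ (Fin n → ℂ) :=
  QuadraticMap.pi fun _ : Fin n => QuadraticMap.sq

abbrev Cl (n : ℕ) : Type := CliffordAlgebra (sumSq n)

def cgen (n : ℕ) (i : Fin n) : Cl n := CliffordAlgebra.ι (sumSq n) (Pi.single i 1)

open Finset

lemma card_filter_saturated {α β : Type*} [Fintype α] [DecidableEq α] [DecidableEq β]
    (f : α → β) :
    #{S : Finset α | ∀ x y, f x = f y → (x ∈ S ↔ y ∈ S)} = 2 ^ #(univ.image f) := by
  rw [← card_powerset]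
  refine card_nbij' (·.image f) (fun T => univ.filter (f · ∈ T)) (fun S _ => ?_) (fun T _ => ?_)
    (fun S hS => ?_) (fun T hT => ?_)
  · simp
  · simp +contextual
  · replace hS := (mem_filter.1 hS).2
    ext x
    simpa using ⟨fun ⟨y, hy, hyx⟩ => (hS y x hyx).1 hy, fun hx => ⟨x, hx, rfl⟩⟩
  · ext y
    simp only [mem_image, mem_filter, mem_univ, true_and]
    refine ⟨fun ⟨x, hx, hxy⟩ => hxy ▸ hx, fun hy => ?_⟩
    obtain ⟨x, -, rfl⟩ := mem_image.1 (mem_powerset.1 hT hy)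
    exact ⟨x, hy, rfl⟩

namespace Equiv.Perm

variable {α : Type*} [Fintype α] [DecidableEq α] (σ : Perm α)

lemma image_eq_self_iff_sameCycle (S : Finset α) :
    S.image σ = S ↔ ∀ x y, σ.SameCycle x y → (x ∈ S ↔ y ∈ S) := by
  constructor
  · intro hS x y hxy
    have hmaps : ∀ k : ℕ, ∀ z ∈ S, (σ ^ k) z ∈ S := by
      intro k
      induction k with
      | zero => simp
      | succ k ih =>
        intro z hz
        rw [pow_succ', mul_apply, ← hS]
        exact mem_image_of_mem σ (ih z hz)
    obtain ⟨k, -, rfl⟩ := hxy.exists_pow_eq'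
    obtain ⟨j, -, hj⟩ := hxy.symm.exists_pow_eq'
    exact ⟨hmaps k x, fun h => hj ▸ hmaps j _ h⟩
  · intro h
    refine eq_of_subset_of_card_le ?_ (card_image_of_injective S σ.injective).ge
    intro y hy
    obtain ⟨x, hx, rfl⟩ := mem_image.1 hy
    exact (h x (σ x) (sameCycle_apply_right.2 (.refl _ _))).1 hx

def cycleLabel (x : α) : Perm α ⊕ α := if x ∈ σ.support then .inl (σ.cycleOf x) else .inr x

lemma cycleLabel_eq_cycleLabel_iff {x y : α} :
    σ.cycleLabel x = σ.cycleLabel y ↔ σ.SameCycle x y := by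
  by_cases hx : x ∈ σ.support <;> by_cases hy : y ∈ σ.support <;>
    simp only [cycleLabel, hx, hy, if_true, if_false, reduceCtorEq, false_iff, Sum.inl.injEq,
      Sum.inr.injEq]
  · exact (sameCycle_iff_cycleOf_eq_of_mem_support hx hy).symm
  · exact fun h => hy (h.mem_support_iff.1 hx)
  · exact fun h => hx (h.mem_support_iff.2 hy)
  · exact ⟨fun h => h ▸ .refl _ _, fun h => h.eq_of_left (notMem_support.1 hx)⟩

lemma image_univ_cycleLabel :
    univ.image σ.cycleLabel = σ.cycleFactorsFinset.disjSum σ.supportᶜ := by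
  ext (c | y)
  · simp only [mem_image, mem_univ, true_and, inl_mem_disjSum, cycleLabel]
    constructor
    · rintro ⟨x, hx⟩
      split_ifs at hx with h
      exact Sum.inl_injective hx ▸ cycleOf_mem_cycleFactorsFinset_iff.2 h
    · intro hc
      obtain ⟨a, ha⟩ := (mem_cycleFactorsFinset_iff.1 hc).1.nonempty_support
      exact ⟨a, by rw [if_pos (mem_cycleFactorsFinset_support_le hc ha), cycle_is_cycleOf ha hc]⟩
  · simp only [mem_image, mem_univ, true_and, inr_mem_disjSum, mem_compl, cycleLabel]
    constructor
    · rintro ⟨x, hx⟩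
      split_ifs at hx with h
      exact Sum.inr_injective hx ▸ h
    · exact fun hy => ⟨y, if_neg hy⟩

lemma card_filter_image_eq_self :
    #{S : Finset α | S.image σ = S} =
      2 ^ (Multiset.card σ.cycleType + (Fintype.card α - #σ.support)) := by
  simp_rw [image_eq_self_iff_sameCycle, ← cycleLabel_eq_cycleLabel_iff]
  rw [card_filter_saturated, image_univ_cycleLabel, card_disjSum, card_compl, cycleType_def,
    Multiset.card_map, card_val]

variable {σ}

lemma odd_orderOf_of_forall_mem_cycleType_odd (hodd : ∀ m ∈ σ.cycleType, Odd m) :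
    Odd (orderOf σ) := by
  refine Nat.not_even_iff_odd.1 fun h => ?_
  have h2 : 2 ∣ σ.cycleType.prod :=
    (even_iff_two_dvd.1 h).trans <| lcm_cycleType σ ▸ Multiset.lcm_dvd.2 fun _ => Multiset.dvd_prod
  obtain ⟨m, hm, hm2⟩ := Nat.prime_two.prime.exists_mem_multiset_dvd h2
  exact Nat.not_even_iff_odd.2 (hodd m hm) (even_iff_two_dvd.2 hm2)

end Equiv.Perm

theorem LinearMap.trace_eq_sum_of_apply_basis {R M ι : Type*} [CommRing R] [AddCommGroup M]
    [Module R M] [Fintype ι] [DecidableEq ι] (b : Module.Basis ι R M) (f : M →ₗ[R] M)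
    (π : ι → ι) (c : ι → R) (hf : ∀ i, f (b i) = c i • b (π i)) :
    LinearMap.trace R M f = ∑ i with π i = i, c i := by
  rw [LinearMap.trace_eq_matrix_trace R b, Matrix.trace, Finset.sum_filter]
  refine Finset.sum_congr rfl fun i _ => ?_
  rw [Matrix.diag_apply, LinearMap.toMatrix_apply, hf, map_smul, b.repr_self, Finsupp.smul_apply,
    Finsupp.single_apply]
  split_ifs <;> simp

variable {n : ℕ}

lemma sumSq_apply (v : Fin n → ℂ) : sumSq n v = ∑ i, v i ^ 2 := by
  simp [sumSq, QuadraticMap.pi_apply, sq]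

lemma ι_single (i : Fin n) (x : ℂ) :
    CliffordAlgebra.ι (sumSq n) (Pi.single i x) = x • cgen n i := by
  rw [cgen, ← map_smul, ← Pi.single_smul, smul_eq_mul, mul_one]

lemma ι_eq_sum_smul_cgen (v : Fin n → ℂ) :
    CliffordAlgebra.ι (sumSq n) v = ∑ i, v i • cgen n i := by
  conv_lhs => rw [← Finset.univ_sum_single v]
  simp only [map_sum, ι_single]

lemma cgen_mul_self (i : Fin n) : cgen n i * cgen n i = 1 := by
  simp [cgen, CliffordAlgebra.ι_sq_scalar, sumSq_apply, Pi.single_apply]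

lemma cgen_mul_cgen_of_ne {i j : Fin n} (h : i ≠ j) :
    cgen n i * cgen n j = -(cgen n j * cgen n i) := by
  have hpolar : QuadraticMap.polar (sumSq n) (Pi.single i 1) (Pi.single j 1) = 0 := by
    simp [QuadraticMap.polar, sumSq_apply, Pi.single_apply, add_sq, Finset.sum_add_distrib,
      Finset.sum_ite_eq', h.symm]
  have := CliffordAlgebra.ι_mul_ι_add_swap (Q := sumSq n) (Pi.single i 1) (Pi.single j 1)
  rw [hpolar, map_zero] at this
  exact eq_neg_of_add_eq_zero_left this

def cprod (l : List (Fin n)) : Cl n := (l.map (cgen n)).prod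

def cmonomial (S : Finset (Fin n)) : Cl n := cprod (S.sort (· ≤ ·))

@[simp] lemma cprod_nil : cprod (n := n) [] = 1 := rfl

@[simp] lemma cprod_cons (i : Fin n) (l : List (Fin n)) :
    cprod (i :: l) = cgen n i * cprod l := by
  simp [cprod]

lemma exists_cprod_eq_smul_of_perm {l l' : List (Fin n)} (h : l.Perm l') :
    ∃ ε : ℤˣ, cprod l = ε • cprod l' := by
  induction h with
  | nil => exact ⟨1, (one_smul _ _).symm⟩
  | cons i _ ih =>
    obtain ⟨ε, hε⟩ := ih
    exact ⟨ε, by rw [cprod_cons, hε, cprod_cons, mul_smul_comm]⟩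
  | swap i j l =>
    by_cases hij : i = j
    · exact ⟨1, by rw [hij, one_smul]⟩
    · refine ⟨-1, ?_⟩
      simp only [cprod_cons, ← mul_assoc, cgen_mul_cgen_of_ne (Ne.symm hij), neg_mul,
        Units.neg_smul, one_smul]
  | trans _ _ ih₁ ih₂ =>
    obtain ⟨ε₁, h₁⟩ := ih₁
    obtain ⟨ε₂, h₂⟩ := ih₂
    exact ⟨ε₁ * ε₂, by rw [h₁, h₂, smul_smul]⟩

lemma exists_cprod_eq_smul_cmonomial {l : List (Fin n)} (hl : l.Nodup) :
    ∃ ε : ℤˣ, cprod l = ε • cmonomial l.toFinset :=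
  exists_cprod_eq_smul_of_perm <| by
    rw [← Multiset.coe_eq_coe, Finset.sort_eq, List.toFinset_val, hl.dedup]

lemma exists_cgen_mul_cmonomial_eq_smul (i : Fin n) (S : Finset (Fin n)) :
    ∃ (ε : ℤˣ) (T : Finset (Fin n)), cgen n i * cmonomial S = ε • cmonomial T := by
  by_cases hi : i ∈ S
  · obtain ⟨ε, hε⟩ := exists_cprod_eq_smul_cmonomial (l := i :: (S.erase i).sort (· ≤ ·))
      (List.nodup_cons.2 ⟨by simp, Finset.sort_nodup _ _⟩)
    have hS : (i :: (S.erase i).sort (· ≤ ·)).toFinset = S := by simp [Finset.insert_erase hi]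
    rw [hS, cprod_cons] at hε
    refine ⟨ε⁻¹, S.erase i, ?_⟩
    rw [eq_inv_smul_iff, ← mul_smul_comm, ← hε, ← mul_assoc, cgen_mul_self, one_mul, cmonomial]
  · obtain ⟨ε, hε⟩ := exists_cprod_eq_smul_cmonomial (l := i :: S.sort (· ≤ ·))
      (List.nodup_cons.2 ⟨by simpa using hi, Finset.sort_nodup _ _⟩)
    exact ⟨ε, _, hε⟩

lemma top_le_span_cmonomial : ⊤ ≤ Submodule.span ℂ (Set.range (cmonomial (n := n))) := by
  set M := Submodule.span ℂ (Set.range (cmonomial (n := n)))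
  have hmul : ∀ i x, x ∈ M → cgen n i * x ∈ M := fun i x hx => by
    refine (Submodule.span_le (p := M.comap (LinearMap.mulLeft ℂ (cgen n i)))).2 ?_ hx
    rintro _ ⟨S, rfl⟩
    obtain ⟨ε, T, h⟩ := exists_cgen_mul_cmonomial_eq_smul i S
    simpa [h] using Submodule.smul_of_tower_mem M ε (Submodule.subset_span ⟨T, rfl⟩)
  rintro x -
  induction x using CliffordAlgebra.left_induction with
  | algebraMap r =>
    rw [Algebra.algebraMap_eq_smul_one]
    exact M.smul_mem r (Submodule.subset_span ⟨∅, by simp [cmonomial]⟩)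
  | add x y hx hy => exact M.add_mem hx hy
  | ι_mul x v hx =>
    rw [ι_eq_sum_smul_cgen, Finset.sum_mul]
    exact M.sum_mem fun i _ => by rw [smul_mul_assoc]; exact M.smul_mem _ (hmul i x hx)

lemma finrank_Cl : Module.finrank ℂ (Cl n) = 2 ^ n := by
  rw [(CliffordAlgebra.equivExterior (sumSq n)).finrank_eq,
    Module.finrank_eq_card_basis (Pi.basisFun ℂ (Fin n)).ExteriorAlgebra, Fintype.card_finset,
    Fintype.card_fin]

def cliffordBasis : Module.Basis (Finset (Fin n)) ℂ (Cl n) :=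
  basisOfTopLeSpanOfCardEqFinrank cmonomial top_le_span_cmonomial <| by
    rw [finrank_Cl, Fintype.card_finset, Fintype.card_fin]

@[simp] lemma coe_cliffordBasis : ⇑(cliffordBasis (n := n)) = cmonomial :=
  coe_basisOfTopLeSpanOfCardEqFinrank _ _ _

lemma map_cprod (f : Cl n →ₐ[ℂ] Cl n) {τ : Fin n → Fin n} (hf : ∀ i, f (cgen n i) = cgen n (τ i))
    (l : List (Fin n)) : f (cprod l) = cprod (l.map τ) := by
  induction l with
  | nil => simp
  | cons i l ih => simp [hf, ih]

section Automorphism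

variable {σ : Equiv.Perm (Fin n)} {g : Cl n ≃ₐ[ℂ] Cl n}

lemma pow_apply_cgen (hg : ∀ i, g (cgen n i) = cgen n (σ i)) (k : ℕ) (i : Fin n) :
    (g ^ k) (cgen n i) = cgen n ((σ ^ k) i) := by
  induction k with
  | zero => rfl
  | succ k ih => rw [pow_succ', AlgEquiv.mul_apply, ih, hg, pow_succ', Equiv.Perm.mul_apply]

lemma exists_apply_cmonomial_eq_smul (hg : ∀ i, g (cgen n i) = cgen n (σ i))
    (S : Finset (Fin n)) : ∃ ε : ℤˣ, g (cmonomial S) = ε • cmonomial (S.image σ) := by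
  obtain ⟨ε, hε⟩ := exists_cprod_eq_smul_cmonomial ((S.sort_nodup (· ≤ ·)).map σ.injective)
  have himage : ((S.sort (· ≤ ·)).map σ).toFinset = S.image σ := by ext; simp
  exact ⟨ε, by rw [cmonomial, ← AlgEquiv.coe_toAlgHom, map_cprod _ hg, hε, himage]⟩

lemma eq_one_of_apply_cmonomial_eq_smul (hg : ∀ i, g (cgen n i) = cgen n (σ i))
    (hσ : Odd (orderOf σ)) {S : Finset (Fin n)} {ε : ℤˣ}
    (h : g (cmonomial S) = ε • cmonomial S) : ε = 1 := by
  have hpow : ∀ k, (g ^ k) (cmonomial S) = ε ^ k • cmonomial S := by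
    intro k
    induction k with
    | zero => simp
    | succ k ih =>
      rw [pow_succ', AlgEquiv.mul_apply, ih, Units.smul_def, map_zsmul, h, ← Units.smul_def,
        smul_smul, pow_succ]
  have hid : (g ^ orderOf σ) (cmonomial S) = cmonomial S := by
    rw [cmonomial, ← AlgEquiv.coe_toAlgHom, map_cprod _ (pow_apply_cgen hg _), pow_orderOf_eq_one]
    simp
  rw [hpow, Int.units_pow_eq_pow_mod_two, Nat.odd_iff.1 hσ, pow_one] at hid
  rcases Int.units_eq_one_or ε with rfl | rfl
  · rfl
  · rw [Units.neg_smul, one_smul, neg_eq_iff_add_eq_zero, ← two_smul ℂ] at hid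
    exact (cliffordBasis.ne_zero S (by simpa using hid)).elim

lemma trace_eq_card_filter_image_eq_self (hg : ∀ i, g (cgen n i) = cgen n (σ i))
    (hσ : Odd (orderOf σ)) :
    LinearMap.trace ℂ (Cl n) g.toLinearMap = #{S : Finset (Fin n) | S.image σ = S} := by
  choose ε hε using exists_apply_cmonomial_eq_smul hg
  have hsign : ∀ S : Finset (Fin n), S.image σ = S → ε S = 1 := fun S hS =>
    eq_one_of_apply_cmonomial_eq_smul hg hσ (hS ▸ hε S)
  rw [LinearMap.trace_eq_sum_of_apply_basis cliffordBasis _ (·.image σ) (fun S => ((ε S : ℤ) : ℂ))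
    fun S => by
      rw [coe_cliffordBasis, AlgEquiv.toLinearMap_apply, hε, Units.smul_def,
        Int.cast_smul_eq_zsmul],
    Finset.sum_congr rfl fun S hS => by rw [hsign S (Finset.mem_filter.1 hS).2]]
  simp

end Automorphism

-- `σ.cycleType` omits the fixed points of `σ`, so `ℓ(α) = card σ.cycleType + (n - #σ.support)`.
/-- if `σ ∈ S_n` has cycle type `α` with all parts odd, then the
trace of the algebra automorphism of the `2ⁿ`-dimensional Clifford algebra
`Cl_n` induced by `c_i ↦ c_{σ(i)}` equals `2^{ℓ(α)}`, where `ℓ(α)` is the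
number of parts of `α` (the full cycle type including the fixed points of `σ`,
whose number of parts is `|cycleType σ| + #fixed points`). -/
theorem basic_spin_character (n : ℕ) (σ : Equiv.Perm (Fin n))
    (hodd : ∀ m ∈ σ.cycleType, Odd m)
    (g : Cl n ≃ₐ[ℂ] Cl n) (hg : ∀ i, g (cgen n i) = cgen n (σ i)) :
    LinearMap.trace ℂ (Cl n) g.toLinearMap =
      (2 : ℂ) ^ (Multiset.card σ.cycleType + (n - σ.support.card)) := by
  rw [trace_eq_card_filter_image_eq_self hg (σ.odd_orderOf_of_forall_mem_cycleType_odd hodd),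
    σ.card_filter_image_eq_self, Fintype.card_fin]
  norm_cast

end
end

section
/- The map Θ sending a standard skew shifted tableau T of size n to its content vector c(T) = (c(T₁),…,c(T_n)) defines a canonical bijection between the set F(n) of standard skew shifted tableaux of size n (two tableaux being identified when there is a content-preserving correspondence of their cells matching the entries) and the set W′(n) of sequences (i₁,…,i_n) ∈ ℤ_{≥0}ⁿ satisfying: (a) if i_k = i_ℓ = 0 with k < ℓ, then 1 ∈ {i_{k+1},…,i_{ℓ−1}}; and (b) if i_k = i_ℓ = a ≥ 1 with k < ℓ, then both a−1 and a+1 belong to {i_{k+1},…,i_{ℓ−1}}. -/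
open Classical

noncomputable section

/-- Cells (0-indexed) of the shifted diagram `ξ*` of a strict partition `ξ`
(given as a strictly decreasing list):
`ξ* = {(i,j) : 0 ≤ i < ℓ, i ≤ j ≤ ξ_i + i - 1}`. -/
def shiftedCells (l : List ℕ) : Finset (ℕ × ℕ) :=
  (Finset.range l.length).biUnion fun a => (Finset.range (l.getD a 0)).image fun j => (a, a + j)

/-- A standard skew shifted tableau of size `n` and shape `ξ/ν`; `pos k` is the cell containing
the entry `k + 1`. -/
structure SSST (n : ℕ) where
  xi : List ℕ
  nu : List ℕ
  xi_sorted : xi.Pairwise (· > ·)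
  xi_pos : ∀ x ∈ xi, 0 < x
  nu_sorted : nu.Pairwise (· > ·)
  nu_pos : ∀ x ∈ nu, 0 < x
  sub_len : nu.length ≤ xi.length
  sub : ∀ i, nu.getD i 0 ≤ xi.getD i 0
  pos : Fin n → ℕ × ℕ
  mem : ∀ k, pos k ∈ shiftedCells xi \ shiftedCells nu
  inj : Function.Injective pos
  surj : ∀ c ∈ shiftedCells xi \ shiftedCells nu, ∃ k, pos k = c
  row : ∀ k l : Fin n, (pos l).1 = (pos k).1 → (pos l).2 = (pos k).2 + 1 → k < l
  col : ∀ k l : Fin n, (pos l).1 = (pos k).1 + 1 → (pos l).2 = (pos k).2 → k < l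

/-- The content vector `c(T)`; the subtraction in `ℕ` is exact, as every cell `(i, j)` has
`i ≤ j`. -/
def contentVec {n : ℕ} (T : SSST n) : Fin n → ℕ :=
  fun k => (T.pos k).2 - (T.pos k).1

/-- The defining conditions of the set `W′(n)`. -/
def WCond {n : ℕ} (v : Fin n → ℕ) : Prop :=
  (∀ k l : Fin n, k < l → v k = 0 → v l = 0 →
    ∃ m : Fin n, k < m ∧ m < l ∧ v m = 1) ∧
  (∀ k l : Fin n, k < l → 1 ≤ v k → v k = v l →
    (∃ m : Fin n, k < m ∧ m < l ∧ v m + 1 = v k) ∧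
    (∃ m : Fin n, k < m ∧ m < l ∧ v m = v k + 1))

/-- Two standard skew shifted tableaux are identified when there is a
content-preserving correspondence of their cells matching the entries, i.e.
exactly when they have the same content vector. -/
def tabSetoid (n : ℕ) : Setoid (SSST n) :=
  ⟨fun T T' => contentVec T = contentVec T',
    ⟨fun _ => rfl, fun h => h.symm, fun h h' => h.trans h'⟩⟩

/-!
If two entries of a standard skew shifted tableau lie on the diagonal of content `a`, say in
cells `(i, i + a)` and `(i', i' + a)` with `i < i'`, the cells `(i, i + a + 1)` and (for `a ≥ 1`)
`(i + 1, i + a)` lie in the diagram, and their entries lie between the two. Hence the content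
vector lies in `W′(n)`; the conditions defining `W′(n)` say exactly that for every `a` the
occurrences of `a` and `a + 1` alternate.

Conversely, given such a sequence `v`, put the `t`-th occurrence of `a` in row `r a + t` of the
diagonal of content `a`, where `r a = r (a + 1) + 1` if `a + 1` occurs before the first `a` and
`r a = r (a + 1)` otherwise. Alternation shows that the diagonals `[r a, r a + #a)` fill a skew
shifted diagram, and that an occurrence of `a` precedes one of `a + 1` iff its row is weakly
above, which gives the row and column conditions. Injectivity of `Θ` is built into the
identification of tableaux.
-/

open Finset

theorem mem_shiftedCells_iff {l : List ℕ} {x y : ℕ} :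
    (x, y) ∈ shiftedCells l ↔ x ≤ y ∧ y - x < l.getD x 0 := by
  simp only [shiftedCells, mem_biUnion, mem_range, mem_image, Prod.mk.injEq]
  constructor
  · rintro ⟨a, -, j, hj, rfl, rfl⟩
    exact ⟨Nat.le_add_right _ _, by omega⟩
  · rintro ⟨hxy, h⟩
    have hx : x < l.length := by
      by_contra hc
      rw [List.getD_eq_default _ _ (by omega)] at h
      omega
    exact ⟨x, hx, y - x, h, rfl, by omega⟩

theorem getD_add_le_of_pairwise_gt {l : List ℕ} (hl : l.Pairwise (· > ·)) (x d : ℕ)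
    (h : 0 < l.getD (x + d) 0) : l.getD (x + d) 0 + d ≤ l.getD x 0 := by
  induction d with
  | zero => simp
  | succ d ih =>
    rw [show x + (d + 1) = x + d + 1 by omega] at h ⊢
    have hlen : x + d + 1 < l.length := by
      by_contra hc
      rw [List.getD_eq_default _ _ (by omega)] at h
      omega
    have hstep : l.getD (x + d + 1) 0 < l.getD (x + d) 0 := by
      rw [List.getD_eq_getElem _ _ hlen, List.getD_eq_getElem _ _ (by omega)]
      exact List.pairwise_iff_getElem.1 hl _ _ _ _ (by omega)
    have := ih (by omega)
    omega

theorem mem_shiftedCells_of_le {l : List ℕ} (hl : l.Pairwise (· > ·)) {p q : ℕ × ℕ}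
    (hq : q ∈ shiftedCells l) (hpq : p ≤ q) (hp : p.1 ≤ p.2) : p ∈ shiftedCells l := by
  obtain ⟨x, y⟩ := q
  obtain ⟨x', y'⟩ := p
  obtain ⟨hx, hy⟩ := Prod.mk_le_mk.1 hpq
  rw [mem_shiftedCells_iff] at hq ⊢
  have := getD_add_le_of_pairwise_gt hl x' (x - x') (by rw [Nat.add_sub_cancel' hx]; omega)
  rw [Nat.add_sub_cancel' hx] at this
  exact ⟨hp, by omega⟩


section Occurrences

variable {n : ℕ} (v : Fin n → ℕ)

def occBefore (x : ℕ) (p : Fin n) : ℕ := #{m | m < p ∧ v m = x}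

def occCount (x : ℕ) : ℕ := #{m | v m = x}

def SeparatedBy (x y : ℕ) : Prop :=
  ∀ p q, p < q → v p = x → v q = x → ∃ m, p < m ∧ m < q ∧ v m = y

def PrecededBy (x y : ℕ) : Prop := ∀ q, v q = x → ∃ m < q, v m = y

theorem occBefore_mono (x : ℕ) {p q : Fin n} (h : p ≤ q) :
    occBefore v x p ≤ occBefore v x q :=
  card_le_card fun m hm => by
    simp only [mem_filter, mem_univ, true_and] at hm ⊢
    exact ⟨hm.1.trans_le h, hm.2⟩

theorem occBefore_le_occCount (x : ℕ) (p : Fin n) : occBefore v x p ≤ occCount v x :=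
  card_le_card fun m hm => by
    simp only [mem_filter, mem_univ, true_and] at hm ⊢
    exact hm.2

variable {v}

theorem occBefore_lt_occBefore {x : ℕ} {p q : Fin n} (hp : v p = x) (h : p < q) :
    occBefore v x p < occBefore v x q := by
  refine card_lt_card ⟨fun m hm => ?_, fun hsub => ?_⟩
  · simp only [mem_filter, mem_univ, true_and] at hm ⊢
    exact ⟨hm.1.trans h, hm.2⟩
  · simpa using hsub (by simp [h, hp] : p ∈ ({m | m < q ∧ v m = x} : Finset (Fin n)))

theorem occBefore_lt_occBefore_iff {x : ℕ} {p q : Fin n} (hp : v p = x) :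
    occBefore v x p < occBefore v x q ↔ p < q :=
  ⟨fun h => lt_of_not_ge fun hqp => (occBefore_mono v x hqp).not_gt h,
    occBefore_lt_occBefore hp⟩

theorem occBefore_le_occBefore_iff {x : ℕ} {p q : Fin n} (hq : v q = x) :
    occBefore v x p ≤ occBefore v x q ↔ p ≤ q := by
  rw [← not_lt, occBefore_lt_occBefore_iff hq, not_lt]

theorem eq_of_occBefore_eq {x : ℕ} {p q : Fin n} (hp : v p = x) (hq : v q = x)
    (h : occBefore v x p = occBefore v x q) : p = q :=
  le_antisymm ((occBefore_le_occBefore_iff hq).1 h.le) ((occBefore_le_occBefore_iff hp).1 h.ge)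

theorem occBefore_lt_occCount {x : ℕ} {p : Fin n} (hp : v p = x) :
    occBefore v x p < occCount v x := by
  refine card_lt_card ⟨fun m hm => ?_, fun hsub => ?_⟩
  · simp only [mem_filter, mem_univ, true_and] at hm ⊢
    exact hm.2
  · simpa using hsub (by simp [hp] : p ∈ ({m | v m = x} : Finset (Fin n)))

theorem exists_occBefore_eq {x t : ℕ} (ht : t < occCount v x) :
    ∃ p, v p = x ∧ occBefore v x p = t := by
  obtain ⟨p, hp, hpt⟩ := surj_on_of_inj_on_of_card_le (s := {m | v m = x})
    (t := range (occCount v x)) (fun p _ => occBefore v x p)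
    (fun p hp => mem_range.2 (occBefore_lt_occCount (mem_filter.1 hp).2))
    (fun p q hp hq => eq_of_occBefore_eq (mem_filter.1 hp).2 (mem_filter.1 hq).2)
    (by simp [occCount]) t (mem_range.2 ht)
  exact ⟨p, (mem_filter.1 hp).2, hpt.symm⟩

end Occurrences

namespace SeparatedBy

variable {n : ℕ} {v : Fin n → ℕ} {x y : ℕ}

theorem occBefore_add_le (h : SeparatedBy v x y) {p q : Fin n} (hp : v p = x)
    (hq : v q = x) (hpq : p ≤ q) :
    occBefore v y p + occBefore v x q ≤ occBefore v y q + occBefore v x p := by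
  induction ht : occBefore v x q generalizing q with
  | zero => have := occBefore_mono v y hpq; omega
  | succ t ih =>
    obtain rfl | hpq := hpq.eq_or_lt
    · omega
    obtain ⟨q', hq', hq't⟩ := exists_occBefore_eq (v := v) (x := x) (t := t)
      (by have := occBefore_lt_occCount (v := v) hq; omega)
    have hq'q : q' < q := (occBefore_lt_occBefore_iff hq').1 (by omega)
    have hpq' : p ≤ q' := (occBefore_le_occBefore_iff hq').1 (by
      have := occBefore_lt_occBefore hp hpq; omega)
    obtain ⟨m, hq'm, hmq, hm⟩ := h q' q hq'q hq' hq
    have := ih hq' hpq' hq't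
    have := occBefore_mono v y hq'm.le
    have := occBefore_lt_occBefore hm hmq
    omega

theorem occBefore_le (h : SeparatedBy v x y) {q : Fin n} (hq : v q = x) :
    occBefore v x q ≤ occBefore v y q := by
  obtain ⟨p, hp, hp0⟩ := exists_occBefore_eq (Nat.zero_lt_of_lt (occBefore_lt_occCount hq))
  have := h.occBefore_add_le hp hq ((occBefore_le_occBefore_iff hq).1 (by omega))
  omega

theorem occBefore_lt (h : SeparatedBy v x y) (hxy : PrecededBy v x y) {q : Fin n}
    (hq : v q = x) : occBefore v x q < occBefore v y q := by
  obtain ⟨p, hp, hp0⟩ := exists_occBefore_eq (Nat.zero_lt_of_lt (occBefore_lt_occCount hq))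
  obtain ⟨m, hmp, hm⟩ := hxy p hp
  have := occBefore_lt_occBefore hm hmp
  have := h.occBefore_add_le hp hq ((occBefore_le_occBefore_iff hq).1 (by omega))
  omega

theorem occCount_le_succ (h : SeparatedBy v x y) :
    occCount v x ≤ occCount v y + 1 := by
  rcases Nat.eq_zero_or_pos (occCount v x) with h0 | hpos
  · omega
  obtain ⟨q, hq, hql⟩ := exists_occBefore_eq (Nat.sub_one_lt_of_lt hpos)
  have := h.occBefore_le hq
  have := occBefore_le_occCount v y q
  omega

theorem occCount_le (h : SeparatedBy v x y) (hxy : PrecededBy v x y) :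
    occCount v x ≤ occCount v y := by
  rcases Nat.eq_zero_or_pos (occCount v x) with h0 | hpos
  · omega
  obtain ⟨q, hq, hql⟩ := exists_occBefore_eq (Nat.sub_one_lt_of_lt hpos)
  have := h.occBefore_lt hxy hq
  have := occBefore_le_occCount v y q
  omega

end SeparatedBy

section Alternation

variable {n : ℕ} {v : Fin n → ℕ} {x y : ℕ}

variable (v) in
def Alternating (x y : ℕ) : Prop := SeparatedBy v x y ∧ SeparatedBy v y x

variable (v) in
def offset (x y : ℕ) : ℕ := if ∃ m, v m = y ∧ ∀ p, v p = x → m < p then 1 else 0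

theorem offset_cases (hne : x ≠ y) :
    offset v x y = 1 ∧ PrecededBy v x y ∨ offset v x y = 0 ∧ PrecededBy v y x := by
  unfold offset
  split_ifs with h
  · obtain ⟨m, hm, hmx⟩ := h
    exact Or.inl ⟨rfl, fun q hq => ⟨m, hmx q hq, hm⟩⟩
  · push Not at h
    refine Or.inr ⟨rfl, fun q hq => ?_⟩
    obtain ⟨p, hp, hpq⟩ := h q hq
    exact ⟨p, hpq.lt_of_ne (by rintro rfl; exact hne (hp.symm.trans hq)), hp⟩

namespace Alternating

theorem lt_iff_occBefore_le (h : Alternating v x y) (hlead : PrecededBy v y x) {p q : Fin n}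
    (hp : v p = x) (hq : v q = y) :
    p < q ↔ occBefore v x p ≤ occBefore v y q := by
  constructor
  · intro hpq
    exact (h.1.occBefore_le hp).trans (occBefore_mono v y hpq.le)
  · intro hle
    have := h.2.occBefore_lt hlead hq
    exact lt_of_not_ge fun hqp => by have := occBefore_mono v x hqp; omega

theorem occCount_le_add_offset (h : Alternating v x y) (hne : x ≠ y) :
    occCount v y ≤ occCount v x + offset v x y := by
  rcases offset_cases (v := v) hne with ⟨hd, -⟩ | ⟨hd, hyx⟩
  · have := h.2.occCount_le_succ
    omega
  · have := h.2.occCount_le hyx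
    omega

theorem occCount_add_offset_le (h : Alternating v x y) (hne : x ≠ y) :
    occCount v x + offset v x y ≤ occCount v y + 1 := by
  rcases offset_cases (v := v) hne with ⟨hd, hxy⟩ | ⟨hd, -⟩
  · have := h.1.occCount_le hxy
    omega
  · have := h.1.occCount_le_succ
    omega

theorem lt_iff_occBefore_add_offset_le (h : Alternating v x y) (hne : x ≠ y) {p q : Fin n}
    (hp : v p = x) (hq : v q = y) :
    p < q ↔ occBefore v x p + offset v x y ≤ occBefore v y q := by
  rcases offset_cases (v := v) hne with ⟨hd, hxy⟩ | ⟨hd, hyx⟩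
  · have hne' : q ≠ p := by rintro rfl; exact hne (hp.symm.trans hq)
    rw [hd, ← not_le, hne'.le_iff_lt, lt_iff_occBefore_le ⟨h.2, h.1⟩ hxy hq hp]
    omega
  · rw [hd, add_zero, lt_iff_occBefore_le h hyx hp hq]

end Alternating

theorem wcond_iff_alternating : WCond v ↔ ∀ a, Alternating v a (a + 1) := by
  constructor
  · rintro ⟨h0, hpos⟩ a
    refine ⟨fun p q hpq hp hq => ?_, fun p q hpq hp hq => ?_⟩
    · rcases Nat.eq_zero_or_pos a with rfl | ha
      · exact h0 p q hpq hp hq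
      · exact (hpos p q hpq (by omega) (hp.trans hq.symm)).2.imp fun m hm => by omega
    · exact (hpos p q hpq (by omega) (hp.trans hq.symm)).1.imp fun m hm => by omega
  · intro h
    refine ⟨fun p q hpq hp hq => (h 0).1 p q hpq hp hq, fun p q hpq hp hpq' => ?_⟩
    obtain ⟨a, ha⟩ := Nat.exists_eq_add_of_le' hp
    refine ⟨((h a).2 p q hpq ha (hpq' ▸ ha)).imp fun m hm => by omega,
      (h (v p)).1 p q hpq rfl hpq'.symm⟩

theorem WCond.alternating (hv : WCond v) (a : ℕ) : Alternating v a (a + 1) :=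
  wcond_iff_alternating.1 hv a

end Alternation

namespace SSST

variable {n : ℕ} (T : SSST n)

theorem pos_fst_le_snd (k : Fin n) : (T.pos k).1 ≤ (T.pos k).2 :=
  (mem_shiftedCells_iff.1 (mem_sdiff.1 (T.mem k)).1).1

theorem pos_mem_of_le {k l : Fin n} {p : ℕ × ℕ} (hk : T.pos k ≤ p) (hl : p ≤ T.pos l)
    (hp : p.1 ≤ p.2) : p ∈ shiftedCells T.xi \ shiftedCells T.nu := by
  have hk' := T.mem k
  have hl' := T.mem l
  rw [mem_sdiff] at hk' hl' ⊢
  exact ⟨mem_shiftedCells_of_le T.xi_sorted hl'.1 hl hp,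
    fun h => hk'.2 (mem_shiftedCells_of_le T.nu_sorted h hk (T.pos_fst_le_snd k))⟩

theorem exists_pos_eq {k l : Fin n} {p : ℕ × ℕ} (hk : T.pos k ≤ p) (hl : p ≤ T.pos l)
    (hp : p.1 ≤ p.2) : ∃ m, T.pos m = p :=
  T.surj p (T.pos_mem_of_le hk hl hp)

theorem le_of_pos_le {k l : Fin n} (h : T.pos k ≤ T.pos l) : k ≤ l := by
  -- walk from `T.pos k` to `T.pos l`, first along the row, then down the column
  induction hd : (T.pos l).1 + (T.pos l).2 - ((T.pos k).1 + (T.pos k).2) generalizing k with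
  | zero =>
    exact (T.inj (le_antisymm h (Prod.le_def.2 (by have := Prod.le_def.1 h; omega)))).le
  | succ d ih =>
    obtain ⟨h1, h2⟩ := Prod.le_def.1 h
    have hk := T.pos_fst_le_snd k
    have hl := T.pos_fst_le_snd l
    rcases h2.lt_or_eq with h2 | h2
    · obtain ⟨m, hm⟩ := T.exists_pos_eq (p := ((T.pos k).1, (T.pos k).2 + 1)) (k := k) (l := l)
        (Prod.le_def.2 ⟨le_rfl, by omega⟩) (Prod.le_def.2 ⟨h1, by omega⟩) (by simp; omega)
      exact (T.row k m (by rw [hm]) (by rw [hm])).le.trans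
        (ih (hm ▸ Prod.le_def.2 ⟨h1, by omega⟩) (by rw [hm]; omega))
    · obtain ⟨m, hm⟩ := T.exists_pos_eq (p := ((T.pos k).1 + 1, (T.pos k).2)) (k := k) (l := l)
        (Prod.le_def.2 ⟨by omega, le_rfl⟩) (Prod.le_def.2 ⟨by omega, by omega⟩)
        (by simp; omega)
      exact (T.col k m (by rw [hm]) (by rw [hm])).le.trans
        (ih (hm ▸ Prod.le_def.2 ⟨by omega, by omega⟩) (by rw [hm]; omega))

theorem lt_of_pos_lt {k l : Fin n} (h : T.pos k < T.pos l) : k < l :=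
  (T.le_of_pos_le h.le).lt_of_ne fun e => h.ne (e ▸ rfl)

theorem exists_lt_lt_of_pos_lt {k l : Fin n} {p : ℕ × ℕ} (hk : T.pos k < p) (hl : p < T.pos l)
    (hp : p.1 ≤ p.2) : ∃ m, k < m ∧ m < l ∧ T.pos m = p := by
  obtain ⟨m, rfl⟩ := T.exists_pos_eq hk.le hl.le hp
  exact ⟨m, T.lt_of_pos_lt hk, T.lt_of_pos_lt hl, rfl⟩

theorem fst_lt_fst_of_contentVec_eq {k l : Fin n} (hkl : k < l)
    (h : contentVec T k = contentVec T l) : (T.pos k).1 < (T.pos l).1 := by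
  have := T.pos_fst_le_snd k
  have := T.pos_fst_le_snd l
  simp only [contentVec] at h
  exact lt_of_not_ge fun hi => hkl.not_ge (T.le_of_pos_le (Prod.le_def.2 ⟨hi, by omega⟩))

theorem exists_between_contentVec_eq_add_one {k l : Fin n} (hkl : k < l)
    (h : contentVec T k = contentVec T l) :
    ∃ m, k < m ∧ m < l ∧ contentVec T m = contentVec T k + 1 := by
  have hi := T.fst_lt_fst_of_contentVec_eq hkl h
  have := T.pos_fst_le_snd k
  have := T.pos_fst_le_snd l
  simp only [contentVec] at h ⊢
  obtain ⟨m, hkm, hml, hm⟩ := T.exists_lt_lt_of_pos_lt (p := ((T.pos k).1, (T.pos k).2 + 1))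
    (Prod.lt_iff.2 (Or.inr ⟨le_rfl, by simp⟩)) (Prod.lt_iff.2 (Or.inl ⟨hi, by simp; omega⟩))
    (by simp; omega)
  exact ⟨m, hkm, hml, by rw [hm]; simp; omega⟩

theorem exists_between_contentVec_add_one_eq {k l : Fin n} (hkl : k < l)
    (h : contentVec T k = contentVec T l) (hk : 0 < contentVec T k) :
    ∃ m, k < m ∧ m < l ∧ contentVec T m + 1 = contentVec T k := by
  have hi := T.fst_lt_fst_of_contentVec_eq hkl h
  have := T.pos_fst_le_snd k
  have := T.pos_fst_le_snd l
  simp only [contentVec] at h hk ⊢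
  obtain ⟨m, hkm, hml, hm⟩ := T.exists_lt_lt_of_pos_lt (p := ((T.pos k).1 + 1, (T.pos k).2))
    (Prod.lt_iff.2 (Or.inl ⟨by simp, le_rfl⟩))
    (Prod.lt_iff.2 (Or.inr ⟨by simp; omega, by simp; omega⟩)) (by simp; omega)
  exact ⟨m, hkm, hml, by rw [hm]; simp; omega⟩

theorem alternating_contentVec (a : ℕ) : Alternating (contentVec T) a (a + 1) := by
  refine ⟨fun k l hkl hk hl => ?_, fun k l hkl hk hl => ?_⟩
  · exact hk ▸ T.exists_between_contentVec_eq_add_one hkl (hk.trans hl.symm)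
  · obtain ⟨m, hkm, hml, hm⟩ :=
      T.exists_between_contentVec_add_one_eq hkl (hk.trans hl.symm) (by omega)
    exact ⟨m, hkm, hml, by omega⟩

theorem wcond_contentVec : WCond (contentVec T) :=
  wcond_iff_alternating.2 T.alternating_contentVec

end SSST

section DiagonalShape

theorem exists_apply_eq_of_step_le_one {μ : ℕ → ℕ} (hstep : ∀ a, μ a ≤ μ (a + 1) + 1)
    {j : ℕ} (hj : j ≤ μ 0) : ∀ {N}, μ N ≤ j → ∃ a, μ a = j
  | 0, hN => ⟨0, le_antisymm hN hj⟩
  | N + 1, hN => by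
    by_cases h : μ N ≤ j
    · exact exists_apply_eq_of_step_le_one hstep hj h
    · exact ⟨N + 1, by have := hstep N; omega⟩

variable (μ : ℕ → ℕ) (M : ℕ)

/-- The strict partition whose shifted diagram meets the diagonal of content `a` in its first
`μ a` rows; `μ` should be antitone, decrease in steps of at most one, and vanish beyond `M`. -/
def shapeOfDiagonals : List ℕ :=
  (List.range (μ 0)).map fun x => #{a ∈ range (M + 1) | x < μ a}

variable {μ M}

theorem shapeOfDiagonals_getD (hμ : Antitone μ) (x : ℕ) :
    (shapeOfDiagonals μ M).getD x 0 = #{a ∈ range (M + 1) | x < μ a} := by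
  rcases lt_or_ge x (μ 0) with h | h
  · rw [List.getD_eq_getElem _ _ (by simpa [shapeOfDiagonals] using h)]
    simp [shapeOfDiagonals]
  · rw [List.getD_eq_default _ _ (by simpa [shapeOfDiagonals] using h), eq_comm, card_eq_zero,
      filter_eq_empty_iff]
    exact fun a _ => by have := hμ (Nat.zero_le a); omega

theorem lt_shapeOfDiagonals_getD_iff (hμ : Antitone μ) (hM : ∀ a, M < a → μ a = 0)
    {x a : ℕ} : a < (shapeOfDiagonals μ M).getD x 0 ↔ x < μ a := by
  rw [shapeOfDiagonals_getD hμ]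
  constructor
  · intro h
    by_contra ha
    have hsub : ({b ∈ range (M + 1) | x < μ b} : Finset ℕ) ⊆ range a := fun b hb => by
      simp only [mem_filter, mem_range] at hb ⊢
      by_contra hba
      have := hμ (not_lt.1 hba)
      omega
    have := card_le_card hsub
    simp only [card_range] at this
    omega
  · intro h
    have haM : a ≤ M := by
      by_contra hc
      rw [hM a (by omega)] at h
      omega
    have hsub : range (a + 1) ⊆ ({b ∈ range (M + 1) | x < μ b} : Finset ℕ) := fun b hb => by
      simp only [mem_filter, mem_range] at hb ⊢
      have := hμ (Nat.lt_succ_iff.1 hb)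
      omega
    have := card_le_card hsub
    simp only [card_range] at this
    omega

theorem mem_shiftedCells_shapeOfDiagonals_iff (hμ : Antitone μ) (hM : ∀ a, M < a → μ a = 0)
    {x y : ℕ} :
    (x, y) ∈ shiftedCells (shapeOfDiagonals μ M) ↔ x ≤ y ∧ x < μ (y - x) := by
  rw [mem_shiftedCells_iff, lt_shapeOfDiagonals_getD_iff hμ hM]

theorem shapeOfDiagonals_pairwise (hμ : Antitone μ) (hstep : ∀ a, μ a ≤ μ (a + 1) + 1)
    (hM : ∀ a, M < a → μ a = 0) : (shapeOfDiagonals μ M).Pairwise (· > ·) := by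
  rw [List.pairwise_iff_getElem]
  intro i j hi hj hij
  rw [← List.getD_eq_getElem _ 0 hi, ← List.getD_eq_getElem _ 0 hj]
  have hj0 : j < μ 0 := by simpa [shapeOfDiagonals] using hj
  obtain ⟨a, ha⟩ := exists_apply_eq_of_step_le_one hstep hj0.le (N := M + 1)
    (by rw [hM _ (by omega)]; omega)
  have h1 : a < (shapeOfDiagonals μ M).getD i 0 :=
    (lt_shapeOfDiagonals_getD_iff hμ hM).2 (by omega)
  have h2 : ¬ a < (shapeOfDiagonals μ M).getD j 0 := fun h =>
    ((lt_shapeOfDiagonals_getD_iff hμ hM).1 h).ne ha.symm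
  omega

theorem shapeOfDiagonals_pos : ∀ z ∈ shapeOfDiagonals μ M, 0 < z := by
  simp only [shapeOfDiagonals, List.mem_map, List.mem_range, forall_exists_index, and_imp]
  rintro _ x hx rfl
  exact card_pos.2 ⟨0, by simpa using hx⟩

end DiagonalShape

section Construction

variable {n : ℕ} (v : Fin n → ℕ)

/-- The top row of the diagonal of content `a` in the tableau built from `v`: going down from
content `a + 1` to content `a`, the top row drops by `offset v a (a + 1)`. -/
def diagTop (a : ℕ) : ℕ := ∑ b ∈ Ico a (univ.sup v), offset v b (b + 1)

def entryRow (k : Fin n) : ℕ := diagTop v (v k) + occBefore v (v k) k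

variable {v}

theorem offset_le_one (x y : ℕ) : offset v x y ≤ 1 := by
  unfold offset; split_ifs <;> omega

theorem occCount_eq_zero_of_sup_lt {a : ℕ} (ha : univ.sup v < a) : occCount v a = 0 :=
  card_eq_zero.2 <| filter_eq_empty_iff.2 fun k _ => (le_sup (mem_univ k)).trans_lt ha |>.ne

theorem diagTop_eq_zero_of_sup_le {a : ℕ} (ha : univ.sup v ≤ a) : diagTop v a = 0 := by
  simp [diagTop, ha]

theorem diagTop_eq_offset_add (a : ℕ) : diagTop v a = offset v a (a + 1) + diagTop v (a + 1) := by
  rcases lt_or_ge a (univ.sup v) with ha | ha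
  · exact sum_eq_sum_Ico_succ_bot ha _
  · have : offset v a (a + 1) = 0 := if_neg fun ⟨m, hm, _⟩ =>
      (le_sup (f := v) (mem_univ m)).not_gt (by omega)
    rw [diagTop_eq_zero_of_sup_le ha, diagTop_eq_zero_of_sup_le (by omega), this]

theorem diagTop_antitone : Antitone (diagTop v) :=
  antitone_nat_of_succ_le fun a => by rw [diagTop_eq_offset_add a]; omega

theorem diagTop_le_succ (a : ℕ) : diagTop v a ≤ diagTop v (a + 1) + 1 := by
  rw [diagTop_eq_offset_add a]; have := offset_le_one (v := v) a (a + 1); omega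

theorem diagTop_add_occCount_antitone (hv : WCond v) :
    Antitone fun a => diagTop v a + occCount v a :=
  antitone_nat_of_succ_le fun a => by
    have := (hv.alternating a).occCount_le_add_offset a.succ_ne_self.symm
    rw [diagTop_eq_offset_add a]; omega

theorem diagTop_add_occCount_le_succ (hv : WCond v) (a : ℕ) :
    diagTop v a + occCount v a ≤ diagTop v (a + 1) + occCount v (a + 1) + 1 := by
  have := (hv.alternating a).occCount_add_offset_le a.succ_ne_self.symm
  rw [diagTop_eq_offset_add a]; omega

theorem lt_iff_entryRow_le (hv : WCond v) {p q : Fin n} {a : ℕ} (hp : v p = a)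
    (hq : v q = a + 1) : p < q ↔ entryRow v p ≤ entryRow v q := by
  rw [(hv.alternating a).lt_iff_occBefore_add_offset_le a.succ_ne_self.symm hp hq,
    entryRow, entryRow, hp, hq, diagTop_eq_offset_add a]
  omega

theorem diagTop_add_occCount_eq_zero {a : ℕ} (ha : univ.sup v < a) :
    diagTop v a + occCount v a = 0 := by
  rw [diagTop_eq_zero_of_sup_le ha.le, occCount_eq_zero_of_sup_lt ha]

variable (v) in
def innerShape : List ℕ := shapeOfDiagonals (diagTop v) (univ.sup v)

variable (v) in
def outerShape : List ℕ := shapeOfDiagonals (fun a => diagTop v a + occCount v a) (univ.sup v)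

theorem mem_outerShape_sdiff_innerShape_iff (hv : WCond v) {x y : ℕ} :
    (x, y) ∈ shiftedCells (outerShape v) \ shiftedCells (innerShape v) ↔
      x ≤ y ∧ diagTop v (y - x) ≤ x ∧ x < diagTop v (y - x) + occCount v (y - x) := by
  rw [mem_sdiff, outerShape, innerShape,
    mem_shiftedCells_shapeOfDiagonals_iff (diagTop_add_occCount_antitone hv)
      fun a ha => diagTop_add_occCount_eq_zero ha,
    mem_shiftedCells_shapeOfDiagonals_iff diagTop_antitone
      fun a ha => diagTop_eq_zero_of_sup_le ha.le]
  omega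

def WCond.tableau (hv : WCond v) : SSST n where
  xi := outerShape v
  nu := innerShape v
  xi_sorted := shapeOfDiagonals_pairwise (diagTop_add_occCount_antitone hv)
    (diagTop_add_occCount_le_succ hv) fun a ha => diagTop_add_occCount_eq_zero ha
  xi_pos := shapeOfDiagonals_pos
  nu_sorted := shapeOfDiagonals_pairwise diagTop_antitone diagTop_le_succ
    fun a ha => diagTop_eq_zero_of_sup_le ha.le
  nu_pos := shapeOfDiagonals_pos
  sub_len := by simp [outerShape, innerShape, shapeOfDiagonals]
  sub i := by
    rw [outerShape, innerShape, shapeOfDiagonals_getD diagTop_antitone,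
      shapeOfDiagonals_getD (diagTop_add_occCount_antitone hv)]
    exact card_le_card (monotone_filter_right _ fun a _ h => Nat.lt_add_right _ h)
  pos k := (entryRow v k, entryRow v k + v k)
  mem k := by
    rw [mem_outerShape_sdiff_innerShape_iff hv, Nat.add_sub_cancel_left, entryRow]
    have := occBefore_lt_occCount (v := v) (rfl : v k = v k)
    omega
  inj k l h := by
    simp only [entryRow, Prod.mk.injEq] at h
    have hkl : v k = v l := by omega
    exact eq_of_occBefore_eq hkl rfl (by rw [hkl] at h; omega)
  surj := by
    rintro ⟨x, y⟩ hxy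
    rw [mem_outerShape_sdiff_innerShape_iff hv] at hxy
    obtain ⟨k, hk, hkt⟩ :=
      exists_occBefore_eq (v := v) (x := y - x) (t := x - diagTop v (y - x)) (by omega)
    exact ⟨k, by simp only [entryRow, hk, hkt, Prod.mk.injEq]; omega⟩
  row k l h1 h2 := by
    simp only at h1 h2
    exact (lt_iff_entryRow_le hv rfl (by omega)).2 (by omega)
  col k l h1 h2 := by
    simp only at h1 h2
    have hk : v k = v l + 1 := by omega
    refine lt_of_le_of_ne (not_lt.1 fun hlk => ?_) fun e => ?_
    · have := (lt_iff_entryRow_le hv rfl hk).1 hlk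
      omega
    · rw [e] at hk
      omega

theorem WCond.contentVec_tableau (hv : WCond v) : contentVec hv.tableau = v := by
  funext k
  simp [contentVec, WCond.tableau]

end Construction

theorem range_contentVec (n : ℕ) : Set.range (contentVec (n := n)) = {v | WCond v} :=
  Set.ext fun v => ⟨by rintro ⟨T, rfl⟩; exact T.wcond_contentVec,
    fun hv => ⟨hv.tableau, hv.contentVec_tableau⟩⟩

/-- the map `Θ : T ↦ c(T)` defines a canonical bijection between
the set `F(n)` of standard skew shifted tableaux of size `n` (identified by
content-preserving correspondences matching the entries) and the set `W′(n)`
of sequences in `ℤ_{≥0}ⁿ` satisfying the conditions (a), (b) of `WCond`. -/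
theorem tableaux_content_bijection (n : ℕ) :
    ∃ Θ : Quotient (tabSetoid n) ≃ {v : Fin n → ℕ // WCond v},
      ∀ T : SSST n, (Θ (Quotient.mk (tabSetoid n) T) : Fin n → ℕ) = contentVec T :=
  ⟨(Setoid.quotientKerEquivRange contentVec).trans (Equiv.setCongr (range_contentVec n)),
    fun _ => rfl⟩

end
end
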